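/- arXiv:2405.00792 — 9 statements merged into one kernel-verified Lean document; each statement's English description precedes it below -/
import Mathlib

section
/- Suppose 0 < δ < δ_max. Then for every θ ∈ Θ: R_g(θ) − R_g(θ_opt) < δ if and only if R_{f_opt}(θ) < δ. -/
open MeasureTheory

noncomputable section

/-- True risk of hypothesis `θ` with respect to target `h`. -/
def risk {X Θ : Type*} [MeasurableSpace X] (μ : Measure X) (f : Θ → X → Bool)
    (h : X → Bool) (θ : Θ) : ℝ :=
  (μ {x | f θ x ≠ h x}).toReal

/-- The region `A_{θ0}`. -/
def Aregion {X Θ : Type*} [MeasurableSpace X] (μ : Measure X) (f : Θ → X → Bool)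
    (g : X → Bool) (θopt : Θ) : Set Θ :=
  {θ | ∀ᵐ x ∂μ, f θopt x ≠ g x → f θ x ≠ g x}

/-- `δ_max = min(inf_{θ ∉ A} R_{f_opt}(θ), inf_{θ ∉ A} (R_g(θ) − R_g(θ_opt)))`. -/
def deltaMax {X Θ : Type*} [MeasurableSpace X] (μ : Measure X) (f : Θ → X → Bool)
    (g : X → Bool) (θopt : Θ) : ℝ :=
  min (⨅ θ : {θ : Θ // θ ∉ Aregion μ f g θopt}, risk μ f (f θopt) θ.1)
      (⨅ θ : {θ : Θ // θ ∉ Aregion μ f g θopt}, (risk μ f g θ.1 - risk μ f g θopt))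

/-- for `0 < δ < δ_max`, `R_g(θ) − R_g(θ_opt) < δ ↔ R_{f_opt}(θ) < δ`. -/
theorem equivalence_lemma
    {X Θ : Type*} [MeasurableSpace X] (μ : Measure X) [IsProbabilityMeasure μ]
    (f : Θ → X → Bool) (g : X → Bool)
    (hf : ∀ θ, Measurable (f θ)) (hg : Measurable g)
    (θopt : Θ) (hopt : ∀ θ : Θ, risk μ f g θopt ≤ risk μ f g θ)
    (δ : ℝ) (hδ : 0 < δ) (hδmax : δ < deltaMax μ f g θopt) :
    ∀ θ : Θ, (risk μ f g θ - risk μ f g θopt < δ ↔ risk μ f (f θopt) θ < δ) := by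
  intro θ
  by_cases hA : θ ∈ Aregion μ f g θopt
  · -- In this case both quantities are equal.
    set E : Set X := {x | f θ x ≠ g x} with hEdef
    set F : Set X := {x | f θopt x ≠ g x} with hFdef
    have hE : MeasurableSet E := (measurableSet_eq_fun (hf θ) hg).compl
    have hF : MeasurableSet F := (measurableSet_eq_fun (hf θopt) hg).compl
    have hFE : μ (F \ E) = 0 := by
      have := (ae_iff.mp hA)
      refine measure_mono_null ?_ this
      intro x hx
      simp only [Set.mem_setOf_eq, Classical.not_imp]
      exact ⟨hx.1, hx.2⟩
    have hD : {x | f θ x ≠ f θopt x} = (E \ F) ∪ (F \ E) := by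
      ext x
      simp only [Set.mem_union, Set.mem_diff, hEdef, hFdef, Set.mem_setOf_eq]
      cases h1 : f θ x <;> cases h2 : f θopt x <;> cases h3 : g x <;> simp
    have hDmeas : μ {x | f θ x ≠ f θopt x} = μ (E \ F) := by
      rw [hD]
      refine le_antisymm ?_ (measure_mono Set.subset_union_left)
      calc μ ((E \ F) ∪ (F \ E)) ≤ μ (E \ F) + μ (F \ E) := measure_union_le _ _
        _ = μ (E \ F) := by rw [hFE, add_zero]
    have hμE : μ E = μ (E ∩ F) + μ (E \ F) := (measure_inter_add_diff (μ := μ) E hF).symm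
    have hμF : μ F = μ (E ∩ F) := by
      have h := (measure_inter_add_diff (μ := μ) F hE).symm
      rwa [hFE, add_zero, Set.inter_comm] at h
    have hfin : ∀ s : Set X, μ s ≠ ⊤ := fun s => (measure_lt_top μ s).ne
    have key : risk μ f g θ - risk μ f g θopt = risk μ f (f θopt) θ := by
      simp only [risk]
      rw [← hEdef, ← hFdef, hDmeas, hμE, hμF, ENNReal.toReal_add (hfin _) (hfin _)]
      ring
    rw [key]
  · -- Both sides are false.
    have hbd1 : BddBelow (Set.range fun θ' : {θ : Θ // θ ∉ Aregion μ f g θopt} =>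
        risk μ f (f θopt) θ'.1) := by
      refine ⟨0, ?_⟩; rintro y ⟨θ', rfl⟩; exact ENNReal.toReal_nonneg
    have hbd2 : BddBelow (Set.range fun θ' : {θ : Θ // θ ∉ Aregion μ f g θopt} =>
        risk μ f g θ'.1 - risk μ f g θopt) := by
      refine ⟨0, ?_⟩; rintro y ⟨θ', rfl⟩; exact sub_nonneg.mpr (hopt θ'.1)
    have h1 : δ < risk μ f (f θopt) θ :=
      lt_of_lt_of_le hδmax (le_trans (min_le_left _ _) (ciInf_le hbd1 ⟨θ, hA⟩))
    have h2 : δ < risk μ f g θ - risk μ f g θopt :=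
      lt_of_lt_of_le hδmax (le_trans (min_le_right _ _) (ciInf_le hbd2 ⟨θ, hA⟩))
    exact iff_of_false (not_lt.mpr h2.le) (not_lt.mpr h1.le)

end
end

section
/- Suppose 0 < δ < δ_max. Then for every n and every sample x^n = (x_1,…,x_n) with all coordinates in X₀: if R_{f_opt}(θ̂^{f_opt}(x^n)) > δ, then R_{f_opt}(θ̂^g(x^n)) > δ. -/
open MeasureTheory

noncomputable section

/-- Empirical risk of `θ` on the sample `xs` with respect to target `h` (0-1 loss). -/
def empRisk {X Θ : Type*} (f : Θ → X → Bool) (h : X → Bool) {n : ℕ}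
    (θ : Θ) (xs : Fin n → X) : ℝ :=
  (1 / (n : ℝ)) * ∑ i, if f θ (xs i) = h (xs i) then (0 : ℝ) else 1

/-- `sel` is an ERM selector for target `h`: on every sample it minimizes the
empirical risk, and among minimizers it has maximal true risk w.r.t. `fopt`. -/
def IsERM {X Θ : Type*} [MeasurableSpace X] (μ : Measure X) (f : Θ → X → Bool)
    (h fopt : X → Bool) (sel : ∀ n : ℕ, (Fin n → X) → Θ) : Prop :=
  ∀ (n : ℕ) (xs : Fin n → X),
    (∀ θ : Θ, empRisk f h (sel n xs) xs ≤ empRisk f h θ xs) ∧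
    (∀ θ : Θ, empRisk f h θ xs = empRisk f h (sel n xs) xs →
      risk μ f fopt θ ≤ risk μ f fopt (sel n xs))

/-- for `0 < δ < δ_max` and any sample with coordinates in `X₀`,
if `R_{f_opt}(θ̂^{f_opt}(x^n)) > δ` then `R_{f_opt}(θ̂^{g}(x^n)) > δ`. -/
theorem realizable_error_forces_agnostic_error
    {X Θ : Type*} [MeasurableSpace X] (μ : Measure X) [IsProbabilityMeasure μ]
    (f : Θ → X → Bool) (g : X → Bool)
    (hf : ∀ θ, Measurable (f θ)) (hg : Measurable g)
    (θopt : Θ) (hopt : ∀ θ : Θ, risk μ f g θopt ≤ risk μ f g θ)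
    (X₀ : Set X) (hX₀meas : MeasurableSet X₀) (hX₀ : μ X₀ = 1)
    (hX₀A : ∀ θ ∈ Aregion μ f g θopt, ∀ x ∈ X₀, f θopt x ≠ g x → f θ x ≠ g x)
    (selg self : ∀ n : ℕ, (Fin n → X) → Θ)
    (hERMg : IsERM μ f g (f θopt) selg)
    (hERMf : IsERM μ f (f θopt) (f θopt) self)
    (δ : ℝ) (hδ : 0 < δ) (hδmax : δ < deltaMax μ f g θopt) :
    ∀ (n : ℕ) (xs : Fin n → X), (∀ i, xs i ∈ X₀) →
      risk μ f (f θopt) (self n xs) > δ →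
      risk μ f (f θopt) (selg n xs) > δ := by
  intro n xs hxs hfgt
  by_cases hA : selg n xs ∈ Aregion μ f g θopt
  · -- selg n xs ∈ A
    have hnn : ∀ (h' : X → Bool) (θ : Θ), 0 ≤ empRisk f h' θ xs := by
      intro h' θ
      unfold empRisk
      apply mul_nonneg (by positivity)
      exact Finset.sum_nonneg (fun i _ => by split <;> norm_num)
    have hopt0 : empRisk f (f θopt) θopt xs = 0 := by
      unfold empRisk; simp
    have hθf0 : empRisk f (f θopt) (self n xs) xs = 0 := by
      have h1 := (hERMf n xs).1 θopt
      rw [hopt0] at h1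
      exact le_antisymm h1 (hnn _ _)
    -- agreement of self n xs with f θopt on the sample
    have hagree : ∀ i, f (self n xs) (xs i) = f θopt (xs i) := by
      intro i
      have hnpos : (0:ℝ) < (n:ℝ) := by exact_mod_cast i.pos
      have hsum : ∑ j, (if f (self n xs) (xs j) = f θopt (xs j) then (0:ℝ) else 1) = 0 := by
        unfold empRisk at hθf0
        have : (1 / (n:ℝ)) ≠ 0 := by positivity
        exact (mul_eq_zero.mp hθf0).resolve_left this
      have hterm : (if f (self n xs) (xs i) = f θopt (xs i) then (0:ℝ) else 1) = 0 := by
        have := Finset.sum_eq_zero_iff_of_nonneg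
          (fun j _ => by split <;> norm_num : ∀ j ∈ Finset.univ,
            0 ≤ (if f (self n xs) (xs j) = f θopt (xs j) then (0:ℝ) else 1))
        exact (this.mp hsum) i (Finset.mem_univ i)
      by_contra hne
      simp [hne] at hterm
    -- empirical g-risk of self equals that of θopt
    have heg_self : empRisk f g (self n xs) xs = empRisk f g θopt xs := by
      unfold empRisk
      congr 1
      exact Finset.sum_congr rfl (fun i _ => by rw [hagree i])
    -- empirical g-risk of selg equals that of θopt
    have heg_selg : empRisk f g (selg n xs) xs = empRisk f g θopt xs := by
      refine le_antisymm ((hERMg n xs).1 θopt) ?_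
      unfold empRisk
      apply mul_le_mul_of_nonneg_left _ (by positivity)
      apply Finset.sum_le_sum
      intro i _
      by_cases hx : f θopt (xs i) = g (xs i)
      · simp [hx]; split <;> norm_num
      · have := hX₀A _ hA (xs i) (hxs i) hx
        simp [hx, this]
    have := (hERMg n xs).2 (self n xs) (heg_self.trans heg_selg.symm)
    linarith
  · -- selg n xs ∉ A : use deltaMax
    have hbdd : BddBelow (Set.range
        (fun θ : {θ : Θ // θ ∉ Aregion μ f g θopt} => risk μ f (f θopt) θ.1)) := by
      refine ⟨0, fun y hy => ?_⟩
      obtain ⟨a, rfl⟩ := hy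
      exact ENNReal.toReal_nonneg
    have h1 : deltaMax μ f g θopt ≤ risk μ f (f θopt) (selg n xs) :=
      le_trans (min_le_left _ _) (ciInf_le hbdd ⟨selg n xs, hA⟩)
    linarith

end
end

section
/- Suppose 0 < δ < δ_max. Then for every n and every sample x^n = (x_1,…,x_n) with all coordinates in X₀: if θ̂^g(x^n) ∈ A_{θ0} and R_{f_opt}(θ̂^{f_opt}(x^n)) < δ, then R_{f_opt}(θ̂^g(x^n)) ≤ δ. -/
open MeasureTheory

noncomputable section

/-- for `0 < δ < δ_max` and any sample with coordinates in `X₀`,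
if `θ̂^g(x^n) ∈ A_{θ0}` and `R_{f_opt}(θ̂^{f_opt}(x^n)) < δ` then
`R_{f_opt}(θ̂^{g}(x^n)) ≤ δ`. -/
theorem no_error_on_Aregion_given_realizable_success
    {X Θ : Type*} [MeasurableSpace X] (μ : Measure X) [IsProbabilityMeasure μ]
    (f : Θ → X → Bool) (g : X → Bool)
    (hf : ∀ θ, Measurable (f θ)) (hg : Measurable g)
    (θopt : Θ) (hopt : ∀ θ : Θ, risk μ f g θopt ≤ risk μ f g θ)
    (X₀ : Set X) (hX₀meas : MeasurableSet X₀) (hX₀ : μ X₀ = 1)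
    (hX₀A : ∀ θ ∈ Aregion μ f g θopt, ∀ x ∈ X₀, f θopt x ≠ g x → f θ x ≠ g x)
    (selg self : ∀ n : ℕ, (Fin n → X) → Θ)
    (hERMg : IsERM μ f g (f θopt) selg)
    (hERMf : IsERM μ f (f θopt) (f θopt) self)
    (δ : ℝ) (hδ : 0 < δ) (hδmax : δ < deltaMax μ f g θopt) :
    ∀ (n : ℕ) (xs : Fin n → X), (∀ i, xs i ∈ X₀) →
      selg n xs ∈ Aregion μ f g θopt →
      risk μ f (f θopt) (self n xs) < δ →
      risk μ f (f θopt) (selg n xs) ≤ δ := by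
  intro n xs hxs hA hself
  set θg := selg n xs with hθg
  -- pointwise decomposition of the 0-1 loss on the sample
  have key : ∀ i, (if f θg (xs i) = g (xs i) then (0:ℝ) else 1)
      = (if f θg (xs i) = f θopt (xs i) then (0:ℝ) else 1)
        + (if f θopt (xs i) = g (xs i) then (0:ℝ) else 1) := by
    intro i
    have h := hX₀A θg hA (xs i) (hxs i)
    revert h
    cases f θg (xs i) <;> cases f θopt (xs i) <;> cases g (xs i) <;> simp
  have hsplit : empRisk f g θg xs
      = empRisk f (f θopt) θg xs + empRisk f g θopt xs := by
    unfold empRisk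
    rw [← mul_add, ← Finset.sum_add_distrib]
    congr 1
    exact Finset.sum_congr rfl (fun i _ => key i)
  have hzero : empRisk f (f θopt) θopt xs = 0 := by
    unfold empRisk; simp
  have hnonneg : ∀ (h : X → Bool) (θ : Θ), 0 ≤ empRisk f h θ xs := by
    intro h θ
    unfold empRisk
    apply mul_nonneg (by positivity)
    apply Finset.sum_nonneg
    intro i _
    split <;> norm_num
  -- empirical risk of θg w.r.t. fopt is 0
  have h1 : empRisk f g θg xs ≤ empRisk f g θopt xs := (hERMg n xs).1 θopt
  have h2 : empRisk f (f θopt) θg xs = 0 := by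
    have := hsplit ▸ h1
    have h3 := hnonneg (f θopt) θg
    linarith
  have h4 : empRisk f (f θopt) (self n xs) xs = 0 := by
    have h5 := (hERMf n xs).1 θopt
    rw [hzero] at h5
    exact le_antisymm h5 (hnonneg _ _)
  have h6 := (hERMf n xs).2 θg (by rw [h2, h4])
  linarith

end
end

section
/- For every n and every sample x^n = (x_1,…,x_n) with all coordinates in X₀: if θ̂^g(x^n) ∈ A_{θ0}, then f_{θ̂^g(x^n)}(x_i) = f_opt(x_i) for every i = 1,…,n, and moreover R_{f_opt}(θ̂^g(x^n)) = R_{f_opt}(θ̂^{f_opt}(x^n)). -/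
open MeasureTheory

noncomputable section

lemma empRisk_nonneg {X Θ : Type*} (f : Θ → X → Bool) (h : X → Bool) {n : ℕ}
    (θ : Θ) (xs : Fin n → X) : 0 ≤ empRisk f h θ xs := by
  unfold empRisk
  apply mul_nonneg (by positivity)
  apply Finset.sum_nonneg
  intro i _
  split <;> norm_num

lemma empRisk_zero {X Θ : Type*} (f : Θ → X → Bool) (h : X → Bool) {n : ℕ}
    (θ : Θ) (xs : Fin n → X) (hθ : ∀ i, f θ (xs i) = h (xs i)) :
    empRisk f h θ xs = 0 := by
  unfold empRisk
  simp [hθ]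

lemma empRisk_zero_iff {X Θ : Type*} (f : Θ → X → Bool) (h : X → Bool) {n : ℕ}
    (hn : 0 < n) (θ : Θ) (xs : Fin n → X) (h0 : empRisk f h θ xs = 0) :
    ∀ i, f θ (xs i) = h (xs i) := by
  intro i
  unfold empRisk at h0
  have hn' : (0:ℝ) < n := by exact_mod_cast hn
  have hS : ∑ j, (if f θ (xs j) = h (xs j) then (0:ℝ) else 1) = 0 := by
    rcases mul_eq_zero.mp h0 with h1 | h1
    · exfalso; rw [one_div] at h1; exact (inv_ne_zero (ne_of_gt hn')) h1
    · exact h1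
  have := (Finset.sum_eq_zero_iff_of_nonneg (fun j _ => by split <;> norm_num)).mp hS
    i (Finset.mem_univ i)
  by_contra hc
  rw [if_neg hc] at this
  norm_num at this

/-- on any sample with coordinates in `X₀`, if `θ̂^g(x^n) ∈ A_{θ0}`
then `f_{θ̂^g(x^n)}` agrees with `f_opt` on every sample point, and moreover
`R_{f_opt}(θ̂^g(x^n)) = R_{f_opt}(θ̂^{f_opt}(x^n))`. -/
theorem erm_on_Aregion_agrees_with_fopt
    {X Θ : Type*} [MeasurableSpace X] (μ : Measure X) [IsProbabilityMeasure μ]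
    (f : Θ → X → Bool) (g : X → Bool)
    (hf : ∀ θ, Measurable (f θ)) (hg : Measurable g)
    (θopt : Θ) (hopt : ∀ θ : Θ, risk μ f g θopt ≤ risk μ f g θ)
    (X₀ : Set X) (hX₀meas : MeasurableSet X₀) (hX₀ : μ X₀ = 1)
    (hX₀A : ∀ θ ∈ Aregion μ f g θopt, ∀ x ∈ X₀, f θopt x ≠ g x → f θ x ≠ g x)
    (selg self : ∀ n : ℕ, (Fin n → X) → Θ)
    (hERMg : IsERM μ f g (f θopt) selg)
    (hERMf : IsERM μ f (f θopt) (f θopt) self) :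
    ∀ (n : ℕ) (xs : Fin n → X), (∀ i, xs i ∈ X₀) →
      selg n xs ∈ Aregion μ f g θopt →
      (∀ i : Fin n, f (selg n xs) (xs i) = f θopt (xs i)) ∧
      risk μ f (f θopt) (selg n xs) = risk μ f (f θopt) (self n xs) := by
  intro n xs hxs hA
  have key : ∀ i : Fin n, f (selg n xs) (xs i) = f θopt (xs i) := by
    rcases Nat.eq_zero_or_pos n with hn | hn
    · subst hn; exact fun i => i.elim0
    · have hn' : (0:ℝ) < n := by exact_mod_cast hn
      have hle : ∀ i : Fin n,
          (if f θopt (xs i) = g (xs i) then (0:ℝ) else 1) ≤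
          (if f (selg n xs) (xs i) = g (xs i) then (0:ℝ) else 1) := by
        intro i
        by_cases h1 : f θopt (xs i) = g (xs i)
        · rw [if_pos h1]; split <;> norm_num
        · have h2 := hX₀A (selg n xs) hA (xs i) (hxs i) h1
          rw [if_neg h1, if_neg h2]
      have hsum : empRisk f g (selg n xs) xs ≤ empRisk f g θopt xs :=
        (hERMg n xs).1 θopt
      unfold empRisk at hsum
      have hS : ∑ i, (if f (selg n xs) (xs i) = g (xs i) then (0:ℝ) else 1)
          ≤ ∑ i, (if f θopt (xs i) = g (xs i) then (0:ℝ) else 1) := by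
        have hpos : (0:ℝ) < 1 / n := by positivity
        exact le_of_mul_le_mul_left hsum hpos
      have hS' := Finset.sum_le_sum (fun i (_ : i ∈ Finset.univ) => hle i)
      have heq := (Finset.sum_eq_sum_iff_of_le (fun i (_ : i ∈ Finset.univ) => hle i)).mp
        (le_antisymm hS' hS)
      intro i
      have hi := heq i (Finset.mem_univ i)
      have htri : ∀ a b c : Bool, a ≠ c → b ≠ c → a = b := by decide
      by_cases h1 : f θopt (xs i) = g (xs i)
      · by_cases h2 : f (selg n xs) (xs i) = g (xs i)
        · rw [h1, h2]
        · rw [if_pos h1, if_neg h2] at hi; norm_num at hi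
      · by_cases h2 : f (selg n xs) (xs i) = g (xs i)
        · rw [if_neg h1, if_pos h2] at hi; norm_num at hi
        · exact htri _ _ _ h2 h1
  refine ⟨key, le_antisymm ?_ ?_⟩
  · -- risk fopt selg ≤ risk fopt self
    have h1 : empRisk f (f θopt) (selg n xs) xs = 0 := empRisk_zero f _ _ xs key
    have h2 : empRisk f (f θopt) (self n xs) xs = 0 := by
      have ha := (hERMf n xs).1 θopt
      have hb : empRisk f (f θopt) θopt xs = 0 := empRisk_zero f _ _ xs (fun i => rfl)
      have hc := empRisk_nonneg f (f θopt) (self n xs) xs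
      linarith
    exact (hERMf n xs).2 (selg n xs) (h1.trans h2.symm)
  · -- risk fopt self ≤ risk fopt selg
    have hkey' : ∀ i : Fin n, f (self n xs) (xs i) = f θopt (xs i) := by
      rcases Nat.eq_zero_or_pos n with hn | hn
      · subst hn; exact fun i => i.elim0
      · have h2 : empRisk f (f θopt) (self n xs) xs = 0 := by
          have ha := (hERMf n xs).1 θopt
          have hb : empRisk f (f θopt) θopt xs = 0 := empRisk_zero f _ _ xs (fun i => rfl)
          have hc := empRisk_nonneg f (f θopt) (self n xs) xs
          linarith
        exact empRisk_zero_iff f _ hn _ xs h2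
    have hempg : empRisk f g (self n xs) xs = empRisk f g (selg n xs) xs := by
      unfold empRisk
      congr 1
      apply Finset.sum_congr rfl
      intro i _
      rw [hkey' i, key i]
    exact (hERMg n xs).2 (self n xs) hempg

end
end

section
/- Let Q ∈ Δ_m have full support (Q_i > 0 for all i), let Π be nonempty with Q ∉ Π, and assume the regularity condition on Π. Then lim_{n→∞} D_KL(Π ∩ 𝒫_n ‖ Q) = D_KL(Π ‖ Q), where the infimum over the empty set is +∞. -/
open Filter

noncomputable section

/-- The set of types of length-`n` sequences over an alphabet of size `m`:
probability vectors all of whose coordinates are integer multiples of `1/n`. -/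
def typesP (m n : ℕ) : Set (Fin m → ℝ) :=
  {p | p ∈ stdSimplex ℝ (Fin m) ∧ ∀ i, ∃ k : ℕ, p i = (k : ℝ) / (n : ℝ)}

/-- KL divergence `D_KL(P‖Q) = Σ_i P_i ln(P_i/Q_i)`. -/
def klDiv {m : ℕ} (P Q : Fin m → ℝ) : ℝ :=
  ∑ i, P i * Real.log (P i / Q i)

/-- KL divergence of a set of distributions from `Q` (as an extended real,
so that the infimum over the empty set is `+∞`). -/
def klDivSet {m : ℕ} (S : Set (Fin m → ℝ)) (Q : Fin m → ℝ) : EReal :=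
  ⨅ P : S, ((klDiv P.1 Q : ℝ) : EReal)

/-- The set `Π` determined by the `K × m` matrix `A` over the alphabet of size
`m + 1`: probability vectors whose first `m` coordinates satisfy at least one of
the `K` linear constraints `(A p)_i ≥ 0`. -/
def PiSet {K m : ℕ} (A : Matrix (Fin K) (Fin m) ℝ) : Set (Fin (m + 1) → ℝ) :=
  {p | p ∈ stdSimplex ℝ (Fin (m + 1)) ∧ ∃ i : Fin K, 0 ≤ ∑ j, A i j * p j.castSucc}

/-- The shifted set `Π_{n,ℓ}`: at least one constraint `(A p)_i ≥ ℓ/(n−ℓ)`. -/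
def PiSetShift {K m : ℕ} (A : Matrix (Fin K) (Fin m) ℝ) (n ℓ : ℕ) :
    Set (Fin (m + 1) → ℝ) :=
  {p | p ∈ stdSimplex ℝ (Fin (m + 1)) ∧
    ∃ i : Fin K, (ℓ : ℝ) / ((n : ℝ) - (ℓ : ℝ)) ≤ ∑ j, A i j * p j.castSucc}

/-- The regularity condition: every point of `Π` is a limit of points of the
simplex satisfying some constraint strictly. -/
def RegularPi {K m : ℕ} (A : Matrix (Fin K) (Fin m) ℝ) : Prop :=
  ∀ p ∈ PiSet A, p ∈ closure {q : Fin (m + 1) → ℝ |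
    q ∈ stdSimplex ℝ (Fin (m + 1)) ∧ ∃ i : Fin K, 0 < ∑ j, A i j * q j.castSucc}


/-!
The lower bound is free: `Π ∩ 𝒫_n ⊆ Π`. For the upper bound, take `p ∈ Π` with `D_KL(p‖Q) < c`.
By continuity of `D_KL(·‖Q)` and regularity there is a point `q` of the simplex near `p`
satisfying some constraint strictly, still with `D_KL(q‖Q) < c`. Rounding the coordinates of
`q` down to multiples of `1/n` (the last coordinate absorbing the remainder) gives types
converging to `q`, which for large `n` satisfy the same strict constraint, hence lie in `Π`.
-/

open Topology

lemma klDivSet_le_of_mem {m : ℕ} {S : Set (Fin m → ℝ)} {P : Fin m → ℝ} (Q : Fin m → ℝ)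
    (hP : P ∈ S) : klDivSet S Q ≤ ((klDiv P Q : ℝ) : EReal) :=
  iInf_le _ (⟨P, hP⟩ : S)

lemma klDivSet_anti {m : ℕ} {S T : Set (Fin m → ℝ)} (hST : S ⊆ T) (Q : Fin m → ℝ) :
    klDivSet T Q ≤ klDivSet S Q :=
  le_iInf fun P => klDivSet_le_of_mem Q (hST P.2)

lemma continuous_klDiv_left {m : ℕ} {Q : Fin m → ℝ} (hQ : ∀ i, Q i ≠ 0) :
    Continuous fun P : Fin m → ℝ => klDiv P Q := by
  have hsplit : ∀ P : Fin m → ℝ,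
      klDiv P Q = ∑ i, (P i * Real.log (P i) - P i * Real.log (Q i)) := by
    intro P
    refine Finset.sum_congr rfl fun i _ => ?_
    rcases eq_or_ne (P i) 0 with h0 | h0
    · simp [h0]
    · rw [Real.log_div h0 (hQ i)]
      ring
  simp only [hsplit]
  exact continuous_finsetSum _ fun i _ =>
    (Real.continuous_mul_log.comp (continuous_apply i)).sub
      ((continuous_apply i).mul continuous_const)

section TypeApproximation

variable {m : ℕ} {q : Fin (m + 1) → ℝ}

def typeCounts (q : Fin (m + 1) → ℝ) (n : ℕ) : Fin (m + 1) → ℕ :=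
  Fin.snoc (fun j => ⌊q j.castSucc * n⌋₊) (n - ∑ j : Fin m, ⌊q j.castSucc * n⌋₊)

lemma sum_floor_le_of_mem_stdSimplex (hq : q ∈ stdSimplex ℝ (Fin (m + 1))) (n : ℕ) :
    ∑ j : Fin m, ⌊q j.castSucc * n⌋₊ ≤ n := by
  have hinit : ∑ j : Fin m, q j.castSucc ≤ 1 := by
    have := hq.2
    rw [Fin.sum_univ_castSucc] at this
    linarith [hq.1 (Fin.last m)]
  have hreal : ((∑ j : Fin m, ⌊q j.castSucc * n⌋₊ : ℕ) : ℝ) ≤ n :=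
    calc ((∑ j : Fin m, ⌊q j.castSucc * n⌋₊ : ℕ) : ℝ)
        ≤ ∑ j : Fin m, q j.castSucc * n := by
          push_cast
          exact Finset.sum_le_sum fun j _ => Nat.floor_le (by have := hq.1 j.castSucc; positivity)
      _ = (∑ j : Fin m, q j.castSucc) * n := by rw [Finset.sum_mul]
      _ ≤ n := mul_le_of_le_one_left n.cast_nonneg hinit
  exact_mod_cast hreal

lemma sum_typeCounts (hq : q ∈ stdSimplex ℝ (Fin (m + 1))) (n : ℕ) :
    ∑ i, typeCounts q n i = n := by
  simp only [typeCounts, Fin.sum_univ_castSucc, Fin.snoc_castSucc, Fin.snoc_last]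
  exact Nat.add_sub_of_le (sum_floor_le_of_mem_stdSimplex hq n)

lemma typeCounts_div_mem_typesP (hq : q ∈ stdSimplex ℝ (Fin (m + 1))) {n : ℕ} (hn : n ≠ 0) :
    (fun i => (typeCounts q n i : ℝ) / n) ∈ typesP (m + 1) n := by
  refine ⟨⟨fun i => by positivity, ?_⟩, fun i => ⟨typeCounts q n i, rfl⟩⟩
  rw [← Finset.sum_div, ← Nat.cast_sum, sum_typeCounts hq]
  exact div_self (Nat.cast_ne_zero.2 hn)

lemma tendsto_typeCounts_div (hq : q ∈ stdSimplex ℝ (Fin (m + 1))) :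
    Tendsto (fun n : ℕ => fun i => (typeCounts q n i : ℝ) / n) atTop (𝓝 q) := by
  have hinit : ∀ j : Fin m,
      Tendsto (fun n : ℕ => (typeCounts q n j.castSucc : ℝ) / n) atTop (𝓝 (q j.castSucc)) :=
    fun j => by
      simpa only [typeCounts, Fin.snoc_castSucc, Function.comp_def] using
        (tendsto_nat_floor_mul_div_atTop (hq.1 j.castSucc)).comp tendsto_natCast_atTop_atTop
  rw [tendsto_pi_nhds]
  refine Fin.lastCases ?_ hinit
  -- the last coordinate is `1` minus the others, both for the types and for `q`
  have hlast : q (Fin.last m) = 1 - ∑ j : Fin m, q j.castSucc := by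
    have := hq.2
    rw [Fin.sum_univ_castSucc] at this
    linarith
  rw [hlast]
  refine (tendsto_const_nhds.sub (tendsto_finsetSum _ fun j _ => hinit j)).congr' ?_
  filter_upwards [eventually_ne_atTop 0] with n hn
  have hsum := (typeCounts_div_mem_typesP hq hn).1.2
  rw [Fin.sum_univ_castSucc] at hsum
  linarith

lemma eventually_exists_mem_typesP (hq : q ∈ stdSimplex ℝ (Fin (m + 1)))
    {U : Set (Fin (m + 1) → ℝ)} (hU : IsOpen U) (hqU : q ∈ U) :
    ∀ᶠ n in atTop, ∃ t ∈ U, t ∈ typesP (m + 1) n := by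
  filter_upwards [tendsto_typeCounts_div hq (hU.mem_nhds hqU), eventually_ne_atTop 0]
    with n hnU hn
  exact ⟨_, hnU, typeCounts_div_mem_typesP hq hn⟩

end TypeApproximation

lemma eventually_klDivSet_inter_typesP_lt {m : ℕ} {S W : Set (Fin (m + 1) → ℝ)}
    (hW : IsOpen W) (hWS : stdSimplex ℝ (Fin (m + 1)) ∩ W ⊆ S)
    (hSW : S ⊆ closure (stdSimplex ℝ (Fin (m + 1)) ∩ W))
    {Q : Fin (m + 1) → ℝ} (hQ : ∀ i, Q i ≠ 0) {c : ℝ} (hc : klDivSet S Q < c) :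
    ∀ᶠ n in atTop, klDivSet (S ∩ typesP (m + 1) n) Q < c := by
  have hcont := continuous_klDiv_left hQ
  obtain ⟨⟨p, hpS⟩, hpc⟩ := iInf_lt_iff.1 hc
  have hV : IsOpen {r | klDiv r Q < c} := isOpen_lt hcont continuous_const
  obtain ⟨q, hqc, hqsimp, hqW⟩ :=
    mem_closure_iff.1 (hSW hpS) _ hV (EReal.coe_lt_coe_iff.1 hpc)
  filter_upwards [eventually_exists_mem_typesP hqsimp (hV.inter hW) ⟨hqc, hqW⟩]
    with n ⟨t, ⟨htc, htW⟩, htn⟩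
  calc klDivSet (S ∩ typesP (m + 1) n) Q
      ≤ ((klDiv t Q : ℝ) : EReal) := klDivSet_le_of_mem Q ⟨hWS ⟨htn.1, htW⟩, htn⟩
    _ < c := EReal.coe_lt_coe_iff.2 htc

lemma isOpen_setOf_exists_pos_constraint {K m : ℕ} (A : Matrix (Fin K) (Fin m) ℝ) :
    IsOpen {q : Fin (m + 1) → ℝ | ∃ i : Fin K, 0 < ∑ j, A i j * q j.castSucc} := by
  simp only [Set.ofPred_exists]
  exact isOpen_iUnion fun i => isOpen_lt continuous_const <|
    continuous_finsetSum _ fun j _ => continuous_const.mul (continuous_apply _)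

theorem kl_projection_of_types_tendsto_general
    {K m : ℕ} (A : Matrix (Fin K) (Fin m) ℝ)
    (Q : Fin (m + 1) → ℝ)
    (hQpos : ∀ i, 0 < Q i)
    (hreg : RegularPi A) :
    Tendsto (fun n : ℕ => klDivSet (PiSet A ∩ typesP (m + 1) n) Q) atTop
      (nhds (klDivSet (PiSet A) Q)) := by
  rw [tendsto_order]
  refine ⟨fun a ha => Eventually.of_forall fun n =>
    ha.trans_le (klDivSet_anti Set.inter_subset_left Q), fun b hb => ?_⟩
  obtain ⟨c, hc, hcb⟩ := EReal.exists_between_coe_real hb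
  have hstrict : stdSimplex ℝ (Fin (m + 1)) ∩
      {q | ∃ i : Fin K, 0 < ∑ j, A i j * q j.castSucc} ⊆ PiSet A :=
    fun q ⟨hq, i, hi⟩ => ⟨hq, i, hi.le⟩
  filter_upwards [eventually_klDivSet_inter_typesP_lt (isOpen_setOf_exists_pos_constraint A)
    hstrict hreg (fun i => (hQpos i).ne') hc] with n hn
  exact hn.trans hcb

/-- for full-support `Q ∉ Π` with `Π` nonempty and regular,
`lim_{n→∞} D_KL(Π ∩ 𝒫_n ‖ Q) = D_KL(Π ‖ Q)` (infimum over the empty set is `+∞`). -/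
theorem kl_projection_of_types_tendsto
    {K m : ℕ} (A : Matrix (Fin K) (Fin m) ℝ)
    (Q : Fin (m + 1) → ℝ) (hQ : Q ∈ stdSimplex ℝ (Fin (m + 1)))
    (hQpos : ∀ i, 0 < Q i)
    (hne : (PiSet A).Nonempty) (hQnot : Q ∉ PiSet A)
    (hreg : RegularPi A) :
    Tendsto (fun n : ℕ => klDivSet (PiSet A ∩ typesP (m + 1) n) Q) atTop
      (nhds (klDivSet (PiSet A) Q)) :=
  kl_projection_of_types_tendsto_general A Q hQpos hreg

end
end

section
/- In the k-boundary setting, every discontinuity point of f_{θ₀} lying in the open interval (0,1) is a discontinuity point of g. -/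
/-!
Suppose `f = f_{θ₀}` jumps at `c ∈ (0,1)` while `g` is constant, say `= G`, near `c`. On a small
interval `[c - η, c + η)` free of other breakpoints, `f` takes one value on `[c - η, c)` and the
other on `[c, c + η)`, so `G` differs from `f` on one of the two halves. Collapsing the breakpoints
of `(c - η, c + η]` onto the endpoint that makes the new hypothesis equal to `G` on the whole
interval keeps the breakpoints monotone and in `[0, 1]`, changes nothing outside the interval, and
removes the errors on that half, which have positive `μ`-measure: this contradicts optimality.
-/

open MeasureTheory Set Filter

noncomputable section

open scoped Classical in
/-- The k-boundary hypothesis with breakpoints `θ`: the alternating step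
function starting at value `0`, i.e. `f_θ(x) = (#{i : θ i ≤ x}) mod 2`. -/
noncomputable def kBoundary {k : ℕ} (θ : Fin k → ℝ) (x : ℝ) : Bool :=
  decide ((Finset.univ.filter fun i => θ i ≤ x).card % 2 = 1)

theorem measure_setOf_ne_lt_of_eq_off {α β : Type*} [MeasurableSpace α] {μ : Measure α}
    [IsFiniteMeasure μ] {f f' g : α → β} {I J : Set α} (hIJ : I ⊆ J) (hI : MeasurableSet I)
    (hμI : μ I ≠ 0) (hout : ∀ x ∉ J, f' x = f x) (hfit : ∀ x ∈ J, f' x = g x)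
    (hmiss : ∀ x ∈ I, f x ≠ g x) :
    μ {x | f' x ≠ g x} < μ {x | f x ≠ g x} := by
  have hsub : {x | f' x ≠ g x} ∪ I ⊆ {x | f x ≠ g x} := by
    rintro x (hx | hx)
    · have hxJ : x ∉ J := fun hxJ => hx (hfit x hxJ)
      simpa [← hout x hxJ] using hx
    · exact hmiss x hx
  have hdisj : Disjoint {x | f' x ≠ g x} I :=
    disjoint_left.2 fun x hx hxI => hx (hfit x (hIJ hxI))
  calc μ {x | f' x ≠ g x} < μ {x | f' x ≠ g x} + μ I :=
        ENNReal.lt_add_right (measure_ne_top _ _) hμI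
    _ = μ ({x | f' x ≠ g x} ∪ I) := (measure_union hdisj hI).symm
    _ ≤ μ {x | f x ≠ g x} := measure_mono hsub

theorem measure_Ico_ne_zero_of_absolutelyContinuous {μ : Measure ℝ} {S : Set ℝ}
    (hμ : volume.restrict S ≪ μ) {p q : ℝ} (hpq : p < q) (hS : Ico p q ⊆ S) :
    μ (Ico p q) ≠ 0 := fun h0 => by
  have := hμ h0
  rw [Measure.restrict_apply measurableSet_Ico, inter_eq_left.2 hS, Real.volume_Ico,
    ENNReal.ofReal_eq_zero] at this
  linarith

theorem notMem_Ioc_iff {α : Type*} [LinearOrder α] {a b t : α} :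
    t ∉ Ioc a b ↔ t ≤ a ∨ b < t := by
  rw [mem_Ioc, not_and_or, not_lt, not_le]

def collapseIoc (a b v t : ℝ) : ℝ := if t ∈ Ioc a b then v else t

section collapseIoc

variable {a b v t x : ℝ}

theorem collapseIoc_monotone (hav : a ≤ v) (hvb : v ≤ b) : Monotone (collapseIoc a b v) := by
  intro s t hst
  unfold collapseIoc
  split_ifs with hs ht ht
  · exact le_rfl
  · rcases notMem_Ioc_iff.1 ht with ht | ht <;> linarith [hs.1]
  · rcases notMem_Ioc_iff.1 hs with hs | hs <;> linarith [ht.2]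
  · exact hst

theorem collapseIoc_mem {s : Set ℝ} (ht : t ∈ s) (hv : v ∈ s) : collapseIoc a b v t ∈ s := by
  unfold collapseIoc; split_ifs <;> assumption

theorem collapseIoc_le_iff_of_notMem (hav : a ≤ v) (hvb : v ≤ b) (hx : x ∉ Ico a b) :
    collapseIoc a b v t ≤ x ↔ t ≤ x := by
  rw [mem_Ico, not_and_or, not_le, not_lt] at hx
  unfold collapseIoc
  split_ifs with ht
  · constructor <;> intro <;> rcases hx with hx | hx <;> linarith [ht.1, ht.2]
  · rfl

theorem collapseIoc_right_le_iff (hx : x ∈ Ico a b) : collapseIoc a b b t ≤ x ↔ t ≤ a := by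
  unfold collapseIoc
  split_ifs with ht
  · constructor <;> intro <;> linarith [hx.1, hx.2, ht.1]
  · constructor <;> intro <;> rcases notMem_Ioc_iff.1 ht with ht | ht <;> linarith [hx.1, hx.2]

theorem collapseIoc_left_le_iff (hx : x ∈ Ico a b) : collapseIoc a b a t ≤ x ↔ t ≤ b := by
  unfold collapseIoc
  split_ifs with ht
  · constructor <;> intro <;> linarith [hx.1, hx.2, ht.2]
  · constructor <;> intro <;> rcases notMem_Ioc_iff.1 ht with ht | ht <;> linarith [hx.1, hx.2]

end collapseIoc

section kBoundary

variable {k : ℕ}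

open scoped Classical in
theorem kBoundary_congr {θ θ' : Fin k → ℝ} {x y : ℝ} (h : ∀ i, θ i ≤ x ↔ θ' i ≤ y) :
    kBoundary θ x = kBoundary θ' y := by
  simp only [kBoundary, Finset.filter_congr fun i _ => h i]

theorem kBoundary_eq_of_forall_notMem_Ioc {θ : Fin k → ℝ} {x y : ℝ} (hxy : x ≤ y)
    (h : ∀ i, θ i ∉ Ioc x y) : kBoundary θ y = kBoundary θ x :=
  kBoundary_congr fun i => ⟨fun hi => not_lt.1 fun hx => h i ⟨hx, hi⟩, fun hi => hi.trans hxy⟩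

theorem eventually_breakpoints_notMem_Icc (θ : Fin k → ℝ) (c : ℝ) :
    ∀ᶠ η in nhds 0, ∀ i, θ i ≠ c → θ i ∉ Icc (c - η) (c + η) := by
  refine eventually_all.2 fun i => ?_
  by_cases hi : θ i = c
  · exact .of_forall fun _ h => absurd hi h
  filter_upwards [eventually_lt_nhds (abs_pos.2 (sub_ne_zero.2 hi))] with η hη _ hmem
  exact (abs_sub_le_iff.2 ⟨by linarith [hmem.2], by linarith [hmem.1]⟩).not_gt hη

variable {θ : Fin k → ℝ} {a b c v x : ℝ}

theorem kBoundary_eq_of_mem_Ico_isolated (hiso : ∀ i, θ i ≠ c → θ i ∉ Icc a b)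
    (hcb : c ≤ b) (hx : x ∈ Ico a c) :
    kBoundary θ x = kBoundary θ a :=
  kBoundary_eq_of_forall_notMem_Ioc hx.1 fun i hi =>
    hiso i (by linarith [hi.2, hx.2]) ⟨hi.1.le, by linarith [hi.2, hx.2]⟩

theorem kBoundary_eq_of_mem_Icc_isolated (hiso : ∀ i, θ i ≠ c → θ i ∉ Icc a b)
    (hac : a ≤ c) (hx : x ∈ Icc c b) :
    kBoundary θ x = kBoundary θ c :=
  kBoundary_eq_of_forall_notMem_Ioc hx.1 fun i hi =>
    hiso i hi.1.ne' ⟨by linarith [hi.1], hi.2.trans hx.2⟩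

theorem kBoundary_ne_of_not_eventually_eq_isolated (hiso : ∀ i, θ i ≠ c → θ i ∉ Icc a b)
    (hac : a < c) (hcb : c < b)
    (hf : ¬ ∀ᶠ y in nhds c, kBoundary θ y = kBoundary θ c) : kBoundary θ a ≠ kBoundary θ c := by
  intro h
  apply hf
  filter_upwards [Ioo_mem_nhds hac hcb] with x hx
  rcases lt_or_ge x c with hxc | hxc
  · rw [kBoundary_eq_of_mem_Ico_isolated hiso hcb.le ⟨hx.1.le, hxc⟩, h]
  · exact kBoundary_eq_of_mem_Icc_isolated hiso hac.le ⟨hxc, hx.2.le⟩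

theorem kBoundary_collapseIoc_of_notMem (hv : v ∈ Icc a b) (hx : x ∉ Ico a b) :
    kBoundary (collapseIoc a b v ∘ θ) x = kBoundary θ x :=
  kBoundary_congr fun _ => collapseIoc_le_iff_of_notMem hv.1 hv.2 hx

theorem kBoundary_collapseIoc_right (hx : x ∈ Ico a b) :
    kBoundary (collapseIoc a b b ∘ θ) x = kBoundary θ a :=
  kBoundary_congr fun _ => collapseIoc_right_le_iff hx

theorem kBoundary_collapseIoc_left (hx : x ∈ Ico a b) :
    kBoundary (collapseIoc a b a ∘ θ) x = kBoundary θ b :=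
  kBoundary_congr fun _ => collapseIoc_left_le_iff hx

end kBoundary

theorem exists_kBoundary_risk_lt {k : ℕ} {μ : Measure ℝ} [IsFiniteMeasure μ]
    (hμ : volume.restrict (Icc (0 : ℝ) 1) ≪ μ) {g : ℝ → Bool} {θ : Fin k → ℝ}
    (hmono : Monotone θ) (hmem : ∀ i, θ i ∈ Icc (0 : ℝ) 1) {a b c : ℝ} (h0a : 0 ≤ a)
    (hac : a < c) (hcb : c < b) (hb1 : b ≤ 1) (hiso : ∀ i, θ i ≠ c → θ i ∉ Icc a b)
    (hjump : kBoundary θ a ≠ kBoundary θ c) (hg : ∀ x ∈ Ico a b, g x = g c) :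
    ∃ θ' : Fin k → ℝ, Monotone θ' ∧ (∀ i, θ' i ∈ Icc (0 : ℝ) 1) ∧
      μ {x | kBoundary θ' x ≠ g x} < μ {x | kBoundary θ x ≠ g x} := by
  have hμI : ∀ {p q}, p < q → Ico p q ⊆ Ico a b → μ (Ico p q) ≠ 0 := fun hpq hI =>
    measure_Ico_ne_zero_of_absolutelyContinuous hμ hpq
      (hI.trans (Ico_subset_Icc_self.trans (Icc_subset_Icc h0a hb1)))
  have hcollapse : ∀ v ∈ Icc a b, Monotone (collapseIoc a b v ∘ θ) ∧
      ∀ i, (collapseIoc a b v ∘ θ) i ∈ Icc (0 : ℝ) 1 := fun v hv =>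
    ⟨(collapseIoc_monotone hv.1 hv.2).comp hmono,
      fun i => collapseIoc_mem (hmem i) ⟨h0a.trans hv.1, hv.2.trans hb1⟩⟩
  by_cases hB : g c = kBoundary θ c
  · have ha : a ∈ Icc a b := ⟨le_rfl, by linarith⟩
    refine ⟨_, (hcollapse a ha).1, (hcollapse a ha).2, measure_setOf_ne_lt_of_eq_off
      (Ico_subset_Ico_right hcb.le) measurableSet_Ico (hμI hac (Ico_subset_Ico_right hcb.le))
      (fun x => kBoundary_collapseIoc_of_notMem ha) (fun x hx => ?_) fun x hx => ?_⟩
    · rw [kBoundary_collapseIoc_left hx,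
        kBoundary_eq_of_mem_Icc_isolated hiso hac.le ⟨hcb.le, le_rfl⟩, hg x hx, hB]
    · rw [kBoundary_eq_of_mem_Ico_isolated hiso hcb.le hx, hg x ⟨hx.1, hx.2.trans hcb⟩, hB]
      exact hjump
  · have hA : g c = kBoundary θ a := (Bool.eq_not.2 hB).trans (Bool.eq_not.2 hjump).symm
    have hb : b ∈ Icc a b := ⟨by linarith, le_rfl⟩
    refine ⟨_, (hcollapse b hb).1, (hcollapse b hb).2, measure_setOf_ne_lt_of_eq_off
      (Ico_subset_Ico_left hac.le) measurableSet_Ico (hμI hcb (Ico_subset_Ico_left hac.le))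
      (fun x => kBoundary_collapseIoc_of_notMem hb) (fun x hx => ?_) fun x hx => ?_⟩
    · rw [kBoundary_collapseIoc_right hx, hg x hx, hA]
    · rw [kBoundary_eq_of_mem_Icc_isolated hiso hac.le ⟨hx.1, hx.2.le⟩,
        hg x ⟨hac.le.trans hx.1, hx.2⟩, hA]
      exact hjump.symm

theorem kBoundary_optimal_breakpoints_are_transitions_general
    {k : ℕ} (μ : Measure ℝ) [IsProbabilityMeasure μ]
    (habs' : volume.restrict (Icc (0 : ℝ) 1) ≪ μ)
    (g : ℝ → Bool)
    (θ₀ : Fin k → ℝ) (hθ₀mono : Monotone θ₀) (hθ₀mem : ∀ i, θ₀ i ∈ Icc (0 : ℝ) 1)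
    (hθ₀opt : ∀ θ : Fin k → ℝ, Monotone θ → (∀ i, θ i ∈ Icc (0 : ℝ) 1) →
      μ {x | kBoundary θ₀ x ≠ g x} ≤ μ {x | kBoundary θ x ≠ g x}) :
    ∀ c ∈ Ioo (0 : ℝ) 1,
      ¬ (∀ᶠ y in nhds c, kBoundary θ₀ y = kBoundary θ₀ c) →
      ¬ (∀ᶠ y in nhds c, g y = g c) := by
  rintro c ⟨hc0, hc1⟩ hf hg
  obtain ⟨ε, hε, hgε⟩ := (nhds_basis_Icc_pos c).eventually_iff.1 hg
  obtain ⟨η, hη, hηε, hηc, hη1, hiso⟩ := (eventually_mem_nhdsWithin.and <|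
    ((eventually_lt_nhds hε).and <| (eventually_lt_nhds hc0).and <|
      (eventually_lt_nhds (sub_pos.2 hc1)).and (eventually_breakpoints_notMem_Icc θ₀ c)).filter_mono
      nhdsWithin_le_nhds).exists (f := nhdsWithin (0 : ℝ) (Ioi 0))
  have hac : c - η < c := sub_lt_self c hη
  have hcb : c < c + η := lt_add_of_pos_right c hη
  obtain ⟨θ, hmono, hmem, hlt⟩ := exists_kBoundary_risk_lt (g := g) habs' hθ₀mono hθ₀mem
    (by linarith) hac hcb (by linarith) hiso
    (kBoundary_ne_of_not_eventually_eq_isolated hiso hac hcb hf)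
    fun x hx => hgε ⟨by linarith [hx.1], by linarith [hx.2]⟩
  exact (hθ₀opt θ hmono hmem).not_gt hlt

/-- in the k-boundary setting, every discontinuity point of
`f_{θ₀}` lying in `(0,1)` is a discontinuity point of `g` (a function into a
discrete set is discontinuous at `c` iff it is not locally constant at `c`). -/
theorem kBoundary_optimal_breakpoints_are_transitions
    {k M : ℕ} (μ : Measure ℝ) [IsProbabilityMeasure μ]
    (habs : μ ≪ volume.restrict (Icc (0 : ℝ) 1))
    (habs' : volume.restrict (Icc (0 : ℝ) 1) ≪ μ)
    (g : ℝ → Bool) (s : Finset ℝ) (hscard : s.card ≤ M)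
    (hsIoo : ∀ b ∈ s, b ∈ Ioo (0 : ℝ) 1)
    (hstep : ∀ x y : ℝ, x ≤ y → (∀ b ∈ s, ¬(x < b ∧ b ≤ y)) → g x = g y)
    (θ₀ : Fin k → ℝ) (hθ₀mono : Monotone θ₀) (hθ₀mem : ∀ i, θ₀ i ∈ Icc (0 : ℝ) 1)
    (hθ₀opt : ∀ θ : Fin k → ℝ, Monotone θ → (∀ i, θ i ∈ Icc (0 : ℝ) 1) →
      μ {x | kBoundary θ₀ x ≠ g x} ≤ μ {x | kBoundary θ x ≠ g x}) :
    ∀ c ∈ Ioo (0 : ℝ) 1,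
      ¬ (∀ᶠ y in nhds c, kBoundary θ₀ y = kBoundary θ₀ c) →
      ¬ (∀ᶠ y in nhds c, g y = g c) :=
  kBoundary_optimal_breakpoints_are_transitions_general μ habs' g θ₀ hθ₀mono hθ₀mem hθ₀opt

end
end

section
/- In the k-boundary setting, let c < d be consecutive points of the set {0, 1} ∪ {discontinuity points of g} (so g is constant on (c,d)). If some coordinate a_i of the optimal parameter vector θ₀ equals c or equals d, then f_{θ₀}(x) = g(x) for μ-a.e. x ∈ (c,d). -/
/-!
If `f_{θ₀} ≠ g` on a non-null part of `(c, d)`, pick such a point `x` off the finitely many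
breakpoints. It lies in a gap `(p, q) ⊆ (c, d)` between consecutive points of
`{c, d} ∪ {θ₀ i}`; both `f_{θ₀}` and `g` are constant there, so they disagree on all of
`(p, q)`. As some breakpoint touches `c` or `d`, one of `p`, `q` is a breakpoint. Moving it to
the other end of the gap keeps the parameter monotone and in `[0, 1]` and flips `f` exactly on
`[p, q)`, which lowers the risk by `μ (p, q) > 0` and contradicts optimality.
-/

open MeasureTheory Set Filter

noncomputable section

theorem Finset.exists_adjacent_around {α : Type*} [LinearOrder α] (T : Finset α) {x c d : α}
    (hc : c ∈ T) (hd : d ∈ T) (hcx : c < x) (hxd : x < d) (hx : x ∉ T) :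
    ∃ p ∈ T, ∃ q ∈ T, c ≤ p ∧ p < x ∧ x < q ∧ q ≤ d ∧ ∀ t ∈ T, t ∉ Set.Ioo p q := by
  have hbelow : (T.filter (· < x)).Nonempty := ⟨c, by simp [hc, hcx]⟩
  have habove : (T.filter (x < ·)).Nonempty := ⟨d, by simp [hd, hxd]⟩
  obtain ⟨hpT, hpx⟩ := Finset.mem_filter.mp (max'_mem _ hbelow)
  obtain ⟨hqT, hxq⟩ := Finset.mem_filter.mp (min'_mem _ habove)
  refine ⟨_, hpT, _, hqT, le_max' _ c (by simp [hc, hcx]), hpx, hxq,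
    min'_le _ d (by simp [hd, hxd]), fun t ht ⟨hpt, htq⟩ => ?_⟩
  rcases lt_trichotomy t x with htx | rfl | hxt
  · exact (le_max' _ t (by simp [ht, htx])).not_gt hpt
  · exact hx ht
  · exact (min'_le _ t (by simp [ht, hxt])).not_gt htq

theorem exists_gap_around_of_notMem_range {ι α : Type*} [Fintype ι] [LinearOrder α]
    {θ : ι → α} {c d x : α} (hx : x ∈ Ioo c d) (hxθ : x ∉ range θ) :
    ∃ p q, c ≤ p ∧ p < x ∧ x < q ∧ q ≤ d ∧ (∀ j, θ j ∉ Ioo p q) ∧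
      (p = c ∨ p ∈ range θ) ∧ (q = d ∨ q ∈ range θ) := by
  have hxT : x ∉ insert c (insert d (Finset.univ.image θ)) := by
    simpa [hx.1.ne', hx.2.ne] using hxθ
  obtain ⟨p, hpT, q, hqT, hcp, hpx, hxq, hqd, hgap⟩ :=
    Finset.exists_adjacent_around _ (by simp) (by simp) hx.1 hx.2 hxT
  simp only [Finset.mem_insert, Finset.mem_image, Finset.mem_univ, true_and] at hpT hqT
  refine ⟨p, q, hcp, hpx, hxq, hqd, fun j => hgap _ (by simp), ?_, ?_⟩
  · rcases hpT with hpc | hpd | hpθ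
    exacts [Or.inl hpc, absurd (hpd ▸ hpx) hx.2.not_gt, Or.inr hpθ]
  · rcases hqT with hqc | hqd | hqθ
    exacts [absurd (hqc ▸ hxq) hx.1.not_gt, Or.inl hqd, Or.inr hqθ]

theorem step_apply_eq_of_mem_Ioo {β : Type*} {g : ℝ → β} {s : Finset ℝ}
    (hstep : ∀ x y : ℝ, x ≤ y → (∀ b ∈ s, ¬(x < b ∧ b ≤ y)) → g x = g y) {c d x y : ℝ}
    (hs : ∀ b ∈ s, b ∉ Ioo c d) (hx : x ∈ Ioo c d) (hy : y ∈ Ioo c d) : g x = g y := by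
  have hle : ∀ x ∈ Ioo c d, ∀ y ∈ Ioo c d, x ≤ y → g x = g y := fun x hx y hy hxy =>
    hstep x y hxy fun b hb hxb => hs b hb ⟨hx.1.trans hxb.1, hxb.2.trans_lt hy.2⟩
  rcases le_total x y with hxy | hyx
  exacts [hle x hx y hy hxy, (hle y hy x hx hyx).symm]

theorem MeasureTheory.Measure.AbsolutelyContinuous.measure_Ioo_ne_zero {μ : Measure ℝ}
    {S : Set ℝ} (h : volume.restrict S ≪ μ) {p q : ℝ} (hpq : p < q) (hS : Ioo p q ⊆ S) :
    μ (Ioo p q) ≠ 0 := fun h0 => by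
  have hvol := h h0
  rw [Measure.restrict_apply measurableSet_Ioo, inter_eq_left.mpr hS, Real.volume_Ioo,
    ENNReal.ofReal_eq_zero] at hvol
  linarith

theorem measure_ne_add_le_of_eqOn {α β : Type*} [MeasurableSpace α] (μ : Measure α)
    {f f' g : α → β} {I N : Set α} (hI : MeasurableSet I) (hN : μ N = 0)
    (hf : ∀ x ∈ I, f x ≠ g x) (hf' : ∀ x ∈ I, f' x = g x) (hout : ∀ x ∉ I, x ∉ N → f' x = f x) :
    μ {x | f' x ≠ g x} + μ I ≤ μ {x | f x ≠ g x} := by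
  set A := {x | f x ≠ g x}
  have hsub : {x | f' x ≠ g x} ⊆ (A \ I) ∪ N := by
    intro x hx
    by_cases hxI : x ∈ I
    · exact absurd (hf' x hxI) hx
    by_cases hxN : x ∈ N
    · exact Or.inr hxN
    · exact Or.inl ⟨by rwa [mem_ofPred_eq, ← hout x hxI hxN], hxI⟩
  have hAI : A ∩ I = I := inter_eq_self_of_subset_right hf
  calc μ {x | f' x ≠ g x} + μ I ≤ μ (A \ I) + μ (A ∩ I) := by
        rw [hAI]
        refine add_le_add_left ?_ (μ I)
        calc μ {x | f' x ≠ g x} ≤ μ (A \ I ∪ N) := measure_mono hsub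
          _ ≤ μ (A \ I) + μ N := measure_union_le _ _
          _ = μ (A \ I) := by rw [hN, add_zero]
    _ = μ A := measure_sdiff_add_inter A hI

theorem Monotone.update_of_le_of_ge {ι α : Type*} [PartialOrder ι] [DecidableEq ι] [Preorder α]
    {θ : ι → α} (hθ : Monotone θ) {i : ι} {a : α} (hlt : ∀ j < i, θ j ≤ a)
    (hgt : ∀ j, i < j → a ≤ θ j) : Monotone (Function.update θ i a) := by
  intro j l hjl
  rcases eq_or_ne j i with rfl | hj <;> rcases eq_or_ne l j with rfl | hl
  · exact le_rfl
  · rw [Function.update_self, Function.update_of_ne hl]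
    exact hgt l (lt_of_le_of_ne hjl (Ne.symm hl))
  · exact le_rfl
  · rcases eq_or_ne l i with rfl | hli
    · rw [Function.update_self, Function.update_of_ne hj]
      exact hlt j (lt_of_le_of_ne hjl hj)
    · rw [Function.update_of_ne hj, Function.update_of_ne hli]
      exact hθ hjl

theorem Monotone.exists_update_of_gap {ι α : Type*} [Fintype ι] [LinearOrder ι] [LinearOrder α]
    {θ : ι → α} (hθ : Monotone θ) {p q : α} (hpq : p ≤ q) (hgap : ∀ j, θ j ∉ Ioo p q)
    (hp : ∃ i, θ i = p) : ∃ i, θ i = p ∧ Monotone (Function.update θ i q) := by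
  obtain ⟨i₁, hi₁⟩ := hp
  obtain ⟨i, hi, himax⟩ :=
    (Finset.univ.filter (θ · = p)).exists_max_image id ⟨i₁, by simp [hi₁]⟩
  simp only [Finset.mem_filter, Finset.mem_univ, true_and, id] at hi himax
  refine ⟨i, hi, hθ.update_of_le_of_ge (fun j hj => (hθ hj.le).trans (hi ▸ hpq)) fun j hj => ?_⟩
  have hpj : p < θ j := (hi ▸ hθ hj.le).lt_of_ne fun h => (himax j h.symm).not_gt hj
  exact not_lt.mp fun hjq => hgap j ⟨hpj, hjq⟩

theorem Monotone.exists_update_across_gap {ι α : Type*} [Fintype ι] [LinearOrder ι]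
    [LinearOrder α] {θ : ι → α} (hθ : Monotone θ) {p q : α} (hpq : p ≤ q)
    (hgap : ∀ j, θ j ∉ Ioo p q) (hend : ∃ i, θ i = p ∨ θ i = q) :
    ∃ i a, (θ i = p ∧ a = q ∨ θ i = q ∧ a = p) ∧ Monotone (Function.update θ i a) := by
  by_cases hp : ∃ i, θ i = p
  · obtain ⟨i, hi, hmono⟩ := hθ.exists_update_of_gap hpq hgap hp
    exact ⟨i, q, Or.inl ⟨hi, rfl⟩, hmono⟩
  · have hq : ∃ i, θ i = q := by
      obtain ⟨i, hi | hi⟩ := hend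
      exacts [absurd ⟨i, hi⟩ hp, ⟨i, hi⟩]
    -- moving a breakpoint down from `q` to `p` is the previous case in the order duals
    obtain ⟨i, hi, hmono⟩ := hθ.dual.exists_update_of_gap (p := OrderDual.toDual q)
      (q := OrderDual.toDual p) hpq (fun j hj => hgap j ⟨hj.2, hj.1⟩) hq
    exact ⟨i, p, Or.inr ⟨hi, rfl⟩, hmono.dual⟩

open scoped Classical in
theorem kBoundary_update {k : ℕ} (θ : Fin k → ℝ) (i : Fin k) (a x : ℝ) :
    kBoundary (Function.update θ i a) x =
      (kBoundary θ x ^^ (decide (θ i ≤ x) ^^ decide (a ≤ x))) := by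
  have hcount : ∀ θ : Fin k → ℝ, (Finset.univ.filter fun j => θ j ≤ x).card
      = (if θ i ≤ x then 1 else 0) + ∑ j ∈ Finset.univ.erase i, if θ j ≤ x then 1 else 0 := by
    intro θ
    rw [Finset.card_filter]
    exact (Finset.add_sum_erase _ (fun j => if θ j ≤ x then 1 else 0) (Finset.mem_univ i)).symm
  have hrest : ∑ j ∈ Finset.univ.erase i, (if Function.update θ i a j ≤ x then 1 else 0)
      = ∑ j ∈ Finset.univ.erase i, if θ j ≤ x then 1 else 0 :=
    Finset.sum_congr rfl fun j hj => by rw [Function.update_of_ne (Finset.ne_of_mem_erase hj)]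
  simp only [kBoundary, hcount, hrest, Function.update_self]
  generalize (∑ j ∈ Finset.univ.erase i, if θ j ≤ x then 1 else 0) = n
  rcases Nat.mod_two_eq_zero_or_one n with hn | hn <;> split_ifs <;> simp [*, Nat.add_mod]

theorem kBoundary_update_of_move {k : ℕ} {θ : Fin k → ℝ} {i : Fin k} {a p q : ℝ} (hpq : p ≤ q)
    (hmove : θ i = p ∧ a = q ∨ θ i = q ∧ a = p) (x : ℝ) :
    kBoundary (Function.update θ i a) x = (kBoundary θ x ^^ decide (x ∈ Ico p q)) := by
  rw [kBoundary_update]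
  congr 1
  rcases hmove with ⟨h, ha⟩ | ⟨h, ha⟩ <;> rw [h, ha] <;>
    by_cases hp : p ≤ x <;> by_cases hq : q ≤ x <;> simp [hp, hq] <;> linarith

theorem kBoundary_eq_of_forall_notMem_Ioo {k : ℕ} {θ : Fin k → ℝ} {p q x y : ℝ}
    (hgap : ∀ j, θ j ∉ Ioo p q) (hx : x ∈ Ioo p q) (hy : y ∈ Ioo p q) :
    kBoundary θ x = kBoundary θ y := by
  have hle : ∀ j, ∀ z ∈ Ioo p q, θ j ≤ z ↔ θ j ≤ p := fun j z hz =>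
    ⟨fun h => not_lt.mp fun hp => hgap j ⟨hp, h.trans_lt hz.2⟩, fun h => h.trans hz.1.le⟩
  have key : ∀ j, θ j ≤ x ↔ θ j ≤ y := fun j => (hle j x hx).trans (hle j y hy).symm
  simp only [kBoundary, key]

theorem kBoundary_risk_update_add_le (μ : Measure ℝ) [NullSingletonClass μ] {k : ℕ}
    {g : ℝ → Bool} {θ : Fin k → ℝ} {i : Fin k} {a p q : ℝ} (hpq : p ≤ q)
    (hmove : θ i = p ∧ a = q ∨ θ i = q ∧ a = p) (hne : ∀ x ∈ Ioo p q, kBoundary θ x ≠ g x) :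
    μ {x | kBoundary (Function.update θ i a) x ≠ g x} + μ (Ioo p q)
      ≤ μ {x | kBoundary θ x ≠ g x} := by
  refine measure_ne_add_le_of_eqOn μ measurableSet_Ioo (measure_singleton p) hne
    (fun x hx => ?_) fun x hx hxp => ?_
  · simpa [kBoundary_update_of_move hpq hmove, Ioo_subset_Ico_self hx]
      using Bool.eq_not_iff.mpr (hne x hx)
  · have hxIco : x ∉ Ico p q := fun h => hx ⟨lt_of_le_of_ne h.1 (Ne.symm hxp), h.2⟩
    simp [kBoundary_update_of_move hpq hmove, hxIco]

theorem kBoundary_agrees_on_touched_interval_general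
    {k : ℕ} (μ : Measure ℝ) [IsProbabilityMeasure μ]
    (habs : μ ≪ volume.restrict (Icc (0 : ℝ) 1))
    (habs' : volume.restrict (Icc (0 : ℝ) 1) ≪ μ)
    (g : ℝ → Bool) (s : Finset ℝ)
    (hsIoo : ∀ b ∈ s, b ∈ Ioo (0 : ℝ) 1)
    (hstep : ∀ x y : ℝ, x ≤ y → (∀ b ∈ s, ¬(x < b ∧ b ≤ y)) → g x = g y)
    (θ₀ : Fin k → ℝ) (hθ₀mono : Monotone θ₀) (hθ₀mem : ∀ i, θ₀ i ∈ Icc (0 : ℝ) 1)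
    (hθ₀opt : ∀ θ : Fin k → ℝ, Monotone θ → (∀ i, θ i ∈ Icc (0 : ℝ) 1) →
      μ {x | kBoundary θ₀ x ≠ g x} ≤ μ {x | kBoundary θ x ≠ g x})
    (c d : ℝ)
    (hc : c ∈ insert (0 : ℝ) (insert 1 (↑s : Set ℝ)))
    (hd : d ∈ insert (0 : ℝ) (insert 1 (↑s : Set ℝ)))
    (hconsec : ∀ b ∈ insert (0 : ℝ) (insert 1 (↑s : Set ℝ)), ¬(c < b ∧ b < d))
    (htouch : ∃ i : Fin k, θ₀ i = c ∨ θ₀ i = d) :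
    ∀ᵐ x ∂μ, x ∈ Ioo c d → kBoundary θ₀ x = g x := by
  have : NullSingletonClass μ := ⟨fun x => habs (measure_singleton x)⟩
  have hunit : ∀ b ∈ insert (0 : ℝ) (insert 1 (↑s : Set ℝ)), b ∈ Icc (0 : ℝ) 1 := by
    rintro b (rfl | rfl | hb)
    exacts [left_mem_Icc.mpr zero_le_one, right_mem_Icc.mpr zero_le_one,
      Ioo_subset_Icc_self (hsIoo b hb)]
  filter_upwards [(finite_range θ₀).countable.ae_notMem μ] with x hxθ hx
  by_contra hne
  obtain ⟨p, q, hcp, hpx, hxq, hqd, hgap, hp, hq⟩ := exists_gap_around_of_notMem_range hx hxθ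
  have hpq : p < q := hpx.trans hxq
  have hpq01 : Icc p q ⊆ Icc 0 1 :=
    Icc_subset_Icc ((hunit c hc).1.trans hcp) (hqd.trans (hunit d hd).2)
  have hend : ∃ i, θ₀ i = p ∨ θ₀ i = q := by
    rcases hp with rfl | ⟨i, hi⟩
    · rcases hq with rfl | ⟨i, hi⟩
      exacts [htouch, ⟨i, Or.inr hi⟩]
    · exact ⟨i, Or.inl hi⟩
  have hbad : ∀ y ∈ Ioo p q, kBoundary θ₀ y ≠ g y := fun y hy => by
    rwa [kBoundary_eq_of_forall_notMem_Ioo hgap hy ⟨hpx, hxq⟩, step_apply_eq_of_mem_Ioo hstep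
      (fun b hb hbcd => hconsec b (by simp [hb]) hbcd) (Ioo_subset_Ioo hcp hqd hy) hx]
  obtain ⟨i, a, hmove, hmono⟩ := hθ₀mono.exists_update_across_gap hpq.le hgap hend
  have hmem : ∀ j, Function.update θ₀ i a j ∈ Icc (0 : ℝ) 1 := by
    refine (Function.forall_update_iff _ (fun _ b => b ∈ Icc (0 : ℝ) 1)).mpr
      ⟨?_, fun j _ => hθ₀mem j⟩
    rcases hmove with ⟨-, rfl⟩ | ⟨-, rfl⟩
    exacts [hpq01 (right_mem_Icc.mpr hpq.le), hpq01 (left_mem_Icc.mpr hpq.le)]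
  have hpos := habs'.measure_Ioo_ne_zero hpq (Ioo_subset_Icc_self.trans hpq01)
  have hle := (kBoundary_risk_update_add_le μ hpq.le hmove hbad).trans (hθ₀opt _ hmono hmem)
  exact hpos (le_zero_iff.mp
    (ENNReal.le_of_add_le_add_left (measure_ne_top μ _) (by rwa [add_zero])))

/-- in the k-boundary setting, let `c < d` be consecutive points
of `{0,1} ∪ {discontinuity points of g}` (here `s` is exactly the set of
discontinuity points of `g`). If some coordinate of the optimal parameter `θ₀`
equals `c` or `d`, then `f_{θ₀} = g` μ-a.e. on `(c,d)`. -/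
theorem kBoundary_agrees_on_touched_interval
    {k M : ℕ} (μ : Measure ℝ) [IsProbabilityMeasure μ]
    (habs : μ ≪ volume.restrict (Icc (0 : ℝ) 1))
    (habs' : volume.restrict (Icc (0 : ℝ) 1) ≪ μ)
    (g : ℝ → Bool) (s : Finset ℝ) (hscard : s.card ≤ M)
    (hsIoo : ∀ b ∈ s, b ∈ Ioo (0 : ℝ) 1)
    (hstep : ∀ x y : ℝ, x ≤ y → (∀ b ∈ s, ¬(x < b ∧ b ≤ y)) → g x = g y)
    (hdisc : ∀ b : ℝ, b ∈ s ↔ ¬ (∀ᶠ y in nhds b, g y = g b))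
    (θ₀ : Fin k → ℝ) (hθ₀mono : Monotone θ₀) (hθ₀mem : ∀ i, θ₀ i ∈ Icc (0 : ℝ) 1)
    (hθ₀opt : ∀ θ : Fin k → ℝ, Monotone θ → (∀ i, θ i ∈ Icc (0 : ℝ) 1) →
      μ {x | kBoundary θ₀ x ≠ g x} ≤ μ {x | kBoundary θ x ≠ g x})
    (c d : ℝ) (hcd : c < d)
    (hc : c ∈ insert (0 : ℝ) (insert 1 (↑s : Set ℝ)))
    (hd : d ∈ insert (0 : ℝ) (insert 1 (↑s : Set ℝ)))
    (hconsec : ∀ b ∈ insert (0 : ℝ) (insert 1 (↑s : Set ℝ)), ¬(c < b ∧ b < d))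
    (htouch : ∃ i : Fin k, θ₀ i = c ∨ θ₀ i = d) :
    ∀ᵐ x ∂μ, x ∈ Ioo c d → kBoundary θ₀ x = g x :=
  kBoundary_agrees_on_touched_interval_general μ habs habs' g s hsIoo hstep θ₀ hθ₀mono hθ₀mem hθ₀opt
    c d hc hd hconsec htouch

end
end

section
/- Assume (injectivity) that θ ≠ θ' implies μ{x : f_θ(x) ≠ f_{θ'}(x)} > 0, and (completeness) that Θ is complete for the pseudometric d(θ,θ') = μ{x : f_θ(x) ≠ f_{θ'}(x)} (every d-Cauchy sequence in Θ has a d-limit in Θ). Then for every θ ∈ Θ there exists a GLP θ* such that for μ-a.e. x, f_{θ*}(x) ≠ g(x) implies f_θ(x) ≠ g(x) (equivalently, ℓ(f_{θ*}(x), g(x)) ≤ ℓ(f_θ(x), g(x)) for μ-a.e. x); consequently, Θ is covered by the regions Ã_{θ*} := {θ : ℓ(f_{θ*}(x), g(x)) ≤ ℓ(f_θ(x), g(x)) for μ-a.e. x} over GLPs θ*. -/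
open MeasureTheory Filter

noncomputable section

/-- `θs` is a generalized optimum point (GLP): every μ-distinguishable
hypothesis is strictly beaten by `θs` on a positive-measure set. -/
def IsGLP {X Θ : Type*} [MeasurableSpace X] (μ : Measure X) (f : Θ → X → Bool)
    (g : X → Bool) (θs : Θ) : Prop :=
  ∀ θ' : Θ, 0 < μ {x | f θ' x ≠ f θs x} →
    0 < μ {x | f θs x = g x ∧ f θ' x ≠ g x}

open Set
open scoped symmDiff Topology

/-!
Write `E θ = {x | f θ x ≠ g x}` for the error set of `θ`. Over `Bool`, the disagreement set of
`θ` and `θ'` is `E θ ∆ E θ'`, and `θ` is a GLP exactly when `E θ` is minimal for almost-everywhere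
inclusion. Along a chain whose error sets decrease a.e., the distance between two terms is the
drop in the measure of their error sets, so the chain is Cauchy and, by completeness, has a lower
bound in `Θ`. The Brezis–Browder ordering principle then gives, below every `θ`, a point `θ*`
such that `μ (E ·)` is constant below `θ*`; equal measure and a.e. inclusion force a.e.
equality, so `E θ*` is a.e.-minimal.
-/

theorem Monotone.exists_le_forall_le_apply_eq {α : Type*} [Preorder α] {φ : α → ℝ}
    (hφ : Monotone φ) (hφ_bdd : BddBelow (range φ))
    (hlb : ∀ u : ℕ → α, Antitone u → BddBelow (range u)) (a : α) :
    ∃ b ≤ a, ∀ c ≤ b, φ c = φ b := by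
  have hstep (n : ℕ) (t : α) : ∃ t' ≤ t, φ t' < sInf (φ '' Iic t) + 1 / (n + 1) := by
    obtain ⟨_, ⟨t', ht', rfl⟩, hlt⟩ := exists_lt_of_csInf_lt (nonempty_Iic.image φ)
      (lt_add_of_pos_right _ Nat.one_div_pos_of_nat)
    exact ⟨t', ht', hlt⟩
  choose F hF_le hF_lt using hstep
  let u : ℕ → α := fun n => Nat.rec (motive := fun _ => α) a F n
  obtain ⟨b, hb⟩ := hlb u (antitone_nat_of_succ_le fun n => hF_le n (u n))
  have hbu (n : ℕ) : b ≤ u n := hb ⟨n, rfl⟩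
  refine ⟨b, hbu 0, fun c hcb => le_antisymm (hφ hcb) ?_⟩
  refine le_of_forall_pos_lt_add fun ε hε => ?_
  obtain ⟨n, hn⟩ := exists_nat_one_div_lt hε
  calc φ b ≤ φ (u (n + 1)) := hφ (hbu (n + 1))
    _ < sInf (φ '' Iic (u n)) + 1 / (n + 1) := hF_lt n (u n)
    _ ≤ φ c + ε := add_le_add
      (csInf_le (hφ_bdd.mono (image_subset_range _ _)) ⟨c, hcb.trans (hbu n), rfl⟩) hn.le

section AESubset

variable {X Θ : Type*} [MeasurableSpace X] {μ : Measure X} [IsFiniteMeasure μ]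

lemma measureReal_symmDiff_of_ae_le {s t : Set X} (hts : t ≤ᵐ[μ] s)
    (hs : NullMeasurableSet s μ) (ht : NullMeasurableSet t μ) :
    μ.real (s ∆ t) = μ.real s - μ.real t := by
  rw [measureReal_def, measure_symmDiff_eq hs ht, ae_le_set.1 hts, add_zero,
    measure_sdiff' s ht (measure_ne_top _ _),
    measure_congr (union_ae_eq_left_iff_ae_subset.2 hts),
    ENNReal.toReal_sub_of_le (measure_mono_ae hts) (measure_ne_top _ _)]
  rfl

lemma exists_forall_ge_measureReal_symmDiff_lt {s : ℕ → Set X}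
    (hs : ∀ i j, i ≤ j → s j ≤ᵐ[μ] s i) (hm : ∀ n, NullMeasurableSet (s n) μ) :
    ∀ ε > 0, ∃ N, ∀ i ≥ N, ∀ j ≥ N, μ.real (s i ∆ s j) < ε := by
  have hanti : Antitone fun n => μ.real (s n) := fun i j hij =>
    ENNReal.toReal_mono (measure_ne_top _ _) (measure_mono_ae (hs i j hij))
  have hcauchy := (tendsto_atTop_ciInf hanti
    ⟨0, forall_mem_range.2 fun _ => measureReal_nonneg⟩).cauchySeq
  intro ε hε
  obtain ⟨N, hN⟩ := Metric.cauchySeq_iff.1 hcauchy ε hε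
  refine ⟨N, fun i hi j hj => ?_⟩
  rcases le_total i j with hij | hji
  · rw [measureReal_symmDiff_of_ae_le (hs i j hij) (hm i) (hm j)]
    exact (le_abs_self _).trans_lt (hN i hi j hj)
  · rw [symmDiff_comm, measureReal_symmDiff_of_ae_le (hs j i hji) (hm j) (hm i)]
    exact (le_abs_self _).trans_lt (hN j hj i hi)

lemma ae_le_of_tendsto_measureReal_symmDiff {s : ℕ → Set X} {t : Set X}
    (hs : ∀ i j, i ≤ j → s j ≤ᵐ[μ] s i)
    (h : Tendsto (fun j => μ.real (s j ∆ t)) atTop (𝓝 0)) (n : ℕ) : t ≤ᵐ[μ] s n := by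
  rw [ae_le_set, ← measureReal_eq_zero_iff]
  refine le_antisymm (ge_of_tendsto h ((eventually_ge_atTop n).mono fun j hj => ?_))
    measureReal_nonneg
  have hsub : t \ s n ⊆ (s j ∆ t) ∪ (s j \ s n) := by
    intro x hx
    by_cases hxj : x ∈ s j <;> simp_all [mem_symmDiff]
  calc μ.real (t \ s n) ≤ μ.real ((s j ∆ t) ∪ (s j \ s n)) := measureReal_mono hsub
    _ ≤ μ.real (s j ∆ t) + μ.real (s j \ s n) := measureReal_union_le _ _
    _ = μ.real (s j ∆ t) := by
      rw [(measureReal_eq_zero_iff).2 (ae_le_set.1 (hs n j hj)), add_zero]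

theorem exists_ae_le_forall_ae_le_imp_ae_eq (E : Θ → Set X)
    (hE : ∀ θ, NullMeasurableSet (E θ) μ)
    (hcomplete : ∀ u : ℕ → Θ,
      (∀ ε > 0, ∃ N, ∀ i ≥ N, ∀ j ≥ N, μ.real (E (u i) ∆ E (u j)) < ε) →
      ∃ l, Tendsto (fun i => μ.real (E (u i) ∆ E l)) atTop (𝓝 0))
    (θ : Θ) : ∃ θs, E θs ≤ᵐ[μ] E θ ∧ ∀ θ', E θ' ≤ᵐ[μ] E θs → E θ' =ᵐ[μ] E θs := by
  let : Preorder Θ :=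
    { le := fun a b => E a ≤ᵐ[μ] E b
      le_refl := fun _ => EventuallyLE.refl _ _
      le_trans := fun _ _ _ => EventuallyLE.trans }
  have hlb (u : ℕ → Θ) (hu : Antitone u) : BddBelow (range u) := by
    obtain ⟨l, hl⟩ := hcomplete u
      (exists_forall_ge_measureReal_symmDiff_lt (fun i j hij => hu hij) fun n => hE (u n))
    exact ⟨l, forall_mem_range.2
      (ae_le_of_tendsto_measureReal_symmDiff (fun i j hij => hu hij) hl)⟩
  obtain ⟨θs, hθs, hmin⟩ := Monotone.exists_le_forall_le_apply_eq
    (φ := fun θ => μ.real (E θ))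
    (fun a b hab => ENNReal.toReal_mono (measure_ne_top _ _) (measure_mono_ae hab))
    ⟨0, forall_mem_range.2 fun _ => measureReal_nonneg⟩ hlb θ
  refine ⟨θs, hθs, fun θ' hθ' =>
    ae_eq_of_ae_subset_of_measure_ge hθ' ?_ (hE θ') (measure_ne_top _ _)⟩
  exact (ENNReal.toReal_le_toReal (measure_ne_top _ _) (measure_ne_top _ _)).1 (hmin θ' hθ').ge

end AESubset

lemma setOf_ne_eq_symmDiff {X : Type*} (a b c : X → Bool) :
    {x | a x ≠ b x} = {x | a x ≠ c x} ∆ {x | b x ≠ c x} := by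
  ext x
  simp only [mem_ofPred_eq, mem_symmDiff]
  cases a x <;> cases b x <;> cases c x <;> decide

theorem isGLP_iff {X Θ : Type*} [MeasurableSpace X] {μ : Measure X} {f : Θ → X → Bool}
    {g : X → Bool} {θs : Θ} :
    IsGLP μ f g θs ↔ ∀ θ', {x | f θ' x ≠ g x} ≤ᵐ[μ] {x | f θs x ≠ g x} →
      {x | f θ' x ≠ g x} =ᵐ[μ] {x | f θs x ≠ g x} := by
  have hbeat (θ' : Θ) :
      {x | f θs x = g x ∧ f θ' x ≠ g x} = {x | f θ' x ≠ g x} \ {x | f θs x ≠ g x} := by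
    ext x
    simp [and_comm]
  simp only [IsGLP, hbeat, setOf_ne_eq_symmDiff (f _) (f θs) g, pos_iff_ne_zero, ← ae_le_set,
    ← measure_symmDiff_eq_zero_iff, not_imp_not]

theorem regions_of_glps_cover_general
    {X Θ : Type*} [MeasurableSpace X] (μ : Measure X) [IsProbabilityMeasure μ]
    (f : Θ → X → Bool) (g : X → Bool)
    (hf : ∀ θ, Measurable (f θ)) (hg : Measurable g)
    -- completeness for the pseudometric d(θ,θ') = μ{x : f_θ(x) ≠ f_θ'(x)}
    (hcomplete : ∀ u : ℕ → Θ,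
      (∀ ε : ℝ, 0 < ε → ∃ N : ℕ, ∀ i ≥ N, ∀ j ≥ N,
        (μ {x | f (u i) x ≠ f (u j) x}).toReal < ε) →
      ∃ θlim : Θ,
        Tendsto (fun i => (μ {x | f (u i) x ≠ f θlim x}).toReal) atTop (nhds 0)) :
    ∀ θ : Θ, ∃ θstar : Θ, IsGLP μ f g θstar ∧
      ∀ᵐ x ∂μ, f θstar x ≠ g x → f θ x ≠ g x := by
  intro θ
  simp only [setOf_ne_eq_symmDiff (f _) (f _) g, ← measureReal_def] at hcomplete
  obtain ⟨θs, hθs, hmin⟩ :=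
    exists_ae_le_forall_ae_le_imp_ae_eq (fun θ => {x | f θ x ≠ g x})
      (fun θ => (measurableSet_eq_fun (hf θ) hg).compl.nullMeasurableSet) hcomplete θ
  exact ⟨θs, isGLP_iff.2 hmin, hθs⟩

/-- under injectivity and completeness of the hypothesis class
for the pseudometric `d(θ,θ') = μ{x : f_θ(x) ≠ f_θ'(x)}`, every `θ ∈ Θ` lies in
the region `Ã_{θ*}` of some GLP `θ*`: there is a GLP `θ*` such that for μ-a.e.
`x`, `f_{θ*}(x) ≠ g(x)` implies `f_θ(x) ≠ g(x)` (i.e. the regions `Ã_{θ*}` over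
GLPs `θ*` cover `Θ`). -/
theorem regions_of_glps_cover
    {X Θ : Type*} [MeasurableSpace X] (μ : Measure X) [IsProbabilityMeasure μ]
    (f : Θ → X → Bool) (g : X → Bool)
    (hf : ∀ θ, Measurable (f θ)) (hg : Measurable g)
    -- injectivity
    (hinj : ∀ θ θ' : Θ, θ ≠ θ' → 0 < μ {x | f θ x ≠ f θ' x})
    -- completeness for the pseudometric d(θ,θ') = μ{x : f_θ(x) ≠ f_θ'(x)}
    (hcomplete : ∀ u : ℕ → Θ,
      (∀ ε : ℝ, 0 < ε → ∃ N : ℕ, ∀ i ≥ N, ∀ j ≥ N,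
        (μ {x | f (u i) x ≠ f (u j) x}).toReal < ε) →
      ∃ θlim : Θ,
        Tendsto (fun i => (μ {x | f (u i) x ≠ f θlim x}).toReal) atTop (nhds 0)) :
    ∀ θ : Θ, ∃ θstar : Θ, IsGLP μ f g θstar ∧
      ∀ᵐ x ∂μ, f θstar x ≠ g x → f θ x ≠ g x :=
  regions_of_glps_cover_general μ f g hf hg hcomplete

end
end

section
/- Let Q ∈ Δ_m have full support (Q_i > 0 for all i), let Π be nonempty with Q ∉ Π, and assume the regularity condition on Π. Let X_1, X_2, … be i.i.d. random variables with distribution Q on the alphabet {1,…,m}, and let T_n ∈ 𝒫_n denote the empirical distribution (type) of (X_1,…,X_n). Then lim_{n→∞} (1/n) ln P(T_n ∈ Π) = −D_KL(Π ‖ Q). -/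
/-
Method of types. A word of length `n` whose type is `t` has probability
`Q^n(x) = exp (-n D(t‖Q)) · t^n(x)`, and `t^n` is a probability measure, so each type class has
`Q^n`-mass at most `exp (-n D(t‖Q))`; since there are at most `(n+1)^M` types,
`Q^n(T_n ∈ Π) ≤ (n+1)^M exp (-n D(Π‖Q))`. Conversely, for a fully supported `q` such that `Π`
contains a relative neighbourhood of `q` in the simplex, the same identity with `q` in place of `t`
and Chebyshev's inequality under `q^n` (types concentrate at `q`) give
`Q^n(T_n ∈ Π) ≥ ½ exp (-n (D(q‖Q) + ε))` for large `n`. Regularity of `Π`, continuity of `D(·‖Q)`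
and a small mixture with `Q` supply such points `q` with `D(q‖Q)` arbitrarily close to `D(Π‖Q)`.
-/
open Filter

noncomputable section

open ProbabilityTheory

/-- The empirical distribution (type) of the first `n` samples. -/
def empiricalType {m : ℕ} {Ω : Type*} (Z : ℕ → Ω → Fin m) (n : ℕ) (ω : Ω) :
    Fin m → ℝ :=
  fun a => ((Finset.univ.filter fun j : Fin n => Z j ω = a).card : ℝ) / (n : ℝ)

open Finset Real Topology

lemma sum_prod_eq_one {α : Type*} [Fintype α] {q : α → ℝ} (hq : ∑ a, q a = 1) (n : ℕ) :
    ∑ x : Fin n → α, ∏ j, q (x j) = 1 := by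
  rw [← Fintype.sum_pow, hq, one_pow]

section WordType

variable {α : Type*} [DecidableEq α] {n : ℕ}

def wordType (x : Fin n → α) : α → ℝ := fun a => (#{j | x j = a} : ℝ) / n

lemma natCast_mul_wordType (x : Fin n → α) (a : α) :
    (n : ℝ) * wordType x a = #{j | x j = a} := by
  rcases eq_or_ne n 0 with rfl | hn
  · simp
  · exact mul_div_cancel₀ _ (Nat.cast_ne_zero.2 hn)

lemma wordType_nonneg (x : Fin n → α) (a : α) : 0 ≤ wordType x a := by
  unfold wordType; positivity

lemma wordType_apply_pos (x : Fin n → α) (j : Fin n) : 0 < wordType x (x j) := by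
  have : 0 < #{i | x i = x j} := card_pos.2 ⟨j, by simp⟩
  have : 0 < n := j.pos
  unfold wordType
  positivity

variable [Fintype α]

lemma sum_comp_eq_mul_sum_wordType (x : Fin n → α) (f : α → ℝ) :
    ∑ j, f (x j) = n * ∑ a, wordType x a * f a := by
  rw [← sum_fiberwise' univ x f, mul_sum]
  refine sum_congr rfl fun a _ => ?_
  rw [← mul_assoc, natCast_mul_wordType, sum_const, nsmul_eq_mul]

lemma wordType_mem_stdSimplex (hn : n ≠ 0) (x : Fin n → α) :
    wordType x ∈ stdSimplex ℝ α := by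
  refine ⟨wordType_nonneg x, ?_⟩
  have h := sum_comp_eq_mul_sum_wordType x 1
  simp only [Pi.one_apply, mul_one, sum_const, card_univ, Fintype.card_fin,
    nsmul_eq_mul] at h
  exact (mul_eq_left₀ (Nat.cast_ne_zero.2 hn)).1 h.symm

lemma card_image_wordType_le :
    #(univ.image (wordType : (Fin n → α) → α → ℝ)) ≤ (n + 1) ^ Fintype.card α := by
  let count : (Fin n → α) → α → Fin (n + 1) := fun x a =>
    ⟨#{j | x j = a}, Nat.lt_succ_of_le ((card_filter_le _ _).trans (by simp))⟩
  have hcount : wordType = (fun c a => ((c a : ℕ) : ℝ) / n) ∘ count := rfl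
  calc #(univ.image (wordType : (Fin n → α) → α → ℝ))
      = #((univ.image count).image fun c a => ((c a : ℕ) : ℝ) / n) := by
        rw [hcount, image_image]
    _ ≤ #(univ : Finset (α → Fin (n + 1))) := card_image_le.trans (card_le_univ _)
    _ = (n + 1) ^ Fintype.card α := by simp

lemma prod_comp_eq_exp_mul_prod (x : Fin n → α) {g h : α → ℝ} (hg : ∀ j, 0 < g (x j))
    (hh : ∀ j, 0 < h (x j)) :
    ∏ j, g (x j) = exp (n * ∑ a, wordType x a * log (g a / h a)) * ∏ j, h (x j) := by
  rw [← sum_comp_eq_mul_sum_wordType, exp_sum, ← prod_mul_distrib]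
  refine prod_congr rfl fun j _ => ?_
  rw [exp_log (div_pos (hg j) (hh j)), div_mul_cancel₀ _ (hh j).ne']

end WordType

open Classical in
/-- The probability `Q^n(T_n ∈ S)`. -/
def typeProb {α : Type*} [Fintype α] [DecidableEq α] (Q : α → ℝ) (S : Set (α → ℝ)) (n : ℕ) :
    ℝ :=
  ∑ x : Fin n → α with wordType x ∈ S, ∏ j, Q (x j)

lemma sum_mul_log_div_comm {ι : Type*} [Fintype ι] (t g h : ι → ℝ) :
    ∑ a, t a * log (g a / h a) = -∑ a, t a * log (h a / g a) := by
  simp only [← sum_neg_distrib, ← inv_div (h _), Real.log_inv, mul_neg]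

lemma sub_le_mul_log_div {p q : ℝ} (hp : 0 ≤ p) (hq : 0 < q) : p - q ≤ p * log (p / q) := by
  have h := mul_nonneg hq.le (InformationTheory.klFun_nonneg (div_nonneg hp hq.le))
  have : q * InformationTheory.klFun (p / q) = p * log (p / q) + q - p := by
    rw [InformationTheory.klFun_apply]; field_simp
  linarith

section KL

variable {M : ℕ}

lemma klDiv_nonneg {p Q : Fin M → ℝ} (hp : p ∈ stdSimplex ℝ (Fin M))
    (hQ : Q ∈ stdSimplex ℝ (Fin M)) (hQpos : ∀ a, 0 < Q a) : 0 ≤ klDiv p Q :=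
  calc 0 = ∑ a, (p a - Q a) := by rw [sum_sub_distrib, hp.2, hQ.2, sub_self]
    _ ≤ klDiv p Q := sum_le_sum fun a _ => sub_le_mul_log_div (hp.1 a) (hQpos a)

lemma continuous_klDiv {Q : Fin M → ℝ} (hQ : ∀ a, 0 < Q a) :
    Continuous fun p : Fin M → ℝ => klDiv p Q := by
  have h : (fun p : Fin M → ℝ => klDiv p Q) =
      fun p => ∑ a, Q a * (p a / Q a * log (p a / Q a)) := by
    funext p
    refine sum_congr rfl fun a _ => ?_
    field_simp [(hQ a).ne']
  rw [h]
  fun_prop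

lemma sum_prod_le_of_forall_wordType_eq {Q : Fin M → ℝ} (hQ : ∀ a, 0 < Q a) {t : Fin M → ℝ}
    (ht : t ∈ stdSimplex ℝ (Fin M)) {n : ℕ} {s : Finset (Fin n → Fin M)}
    (hs : ∀ x ∈ s, wordType x = t) :
    ∑ x ∈ s, ∏ j, Q (x j) ≤ exp (-(n * klDiv t Q)) :=
  calc ∑ x ∈ s, ∏ j, Q (x j) = ∑ x ∈ s, exp (-(n * klDiv t Q)) * ∏ j, t (x j) := by
        refine sum_congr rfl fun x hx => ?_
        obtain rfl := hs x hx
        rw [prod_comp_eq_exp_mul_prod x (fun j => hQ _) (wordType_apply_pos x),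
          sum_mul_log_div_comm, mul_neg]
        rfl
    _ ≤ ∑ x : Fin n → Fin M, exp (-(n * klDiv t Q)) * ∏ j, t (x j) :=
        sum_le_sum_of_subset_of_nonneg (subset_univ _) fun x _ _ =>
          mul_nonneg (exp_pos _).le (prod_nonneg fun j _ => ht.1 _)
    _ = exp (-(n * klDiv t Q)) := by rw [← mul_sum, sum_prod_eq_one ht.2, mul_one]

lemma typeProb_le {Q : Fin M → ℝ} (hQ : ∀ a, 0 < Q a) {S : Set (Fin M → ℝ)} {D : ℝ}
    (hD : ∀ p ∈ S, D ≤ klDiv p Q) {n : ℕ} (hn : n ≠ 0) :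
    typeProb Q S n ≤ (n + 1) ^ M * exp (-(n * D)) := by
  classical
  unfold typeProb
  set T := (univ.filter fun x : Fin n → Fin M => wordType x ∈ S).image wordType
  rw [← sum_fiberwise_of_maps_to (g := wordType) fun x hx => mem_image_of_mem _ hx]
  calc _ ≤ ∑ _t ∈ T, exp (-(n * D)) := by
        refine sum_le_sum fun t ht => ?_
        obtain ⟨x, hx, rfl⟩ := mem_image.1 ht
        refine (sum_prod_le_of_forall_wordType_eq hQ (wordType_mem_stdSimplex hn x)
          fun y hy => (mem_filter.1 hy).2).trans ?_
        have := hD _ (mem_filter.1 hx).2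
        gcongr
    _ ≤ (n + 1) ^ M * exp (-(n * D)) := by
        rw [sum_const, nsmul_eq_mul]
        gcongr
        have hT : #T ≤ (n + 1) ^ M := by
          simpa using (card_le_card (image_subset_image
            (filter_subset _ univ))).trans (card_image_wordType_le (α := Fin M) (n := n))
        exact_mod_cast hT

end KL

lemma dist_sq_le_sum_sq {α : Type*} [Fintype α] (f g : α → ℝ) :
    dist f g ^ 2 ≤ ∑ a, (f a - g a) ^ 2 := by
  have hle : dist f g ≤ √(∑ a, (f a - g a) ^ 2) :=
    (dist_pi_le_iff (sqrt_nonneg _)).2 fun a => by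
      rw [Real.dist_eq, ← Real.sqrt_sq_eq_abs]
      exact Real.sqrt_le_sqrt
        (single_le_sum (fun b _ => sq_nonneg (f b - g b)) (mem_univ a))
  calc dist f g ^ 2 ≤ √(∑ a, (f a - g a) ^ 2) ^ 2 := by gcongr
    _ = ∑ a, (f a - g a) ^ 2 := Real.sq_sqrt (sum_nonneg fun _ _ => sq_nonneg _)

lemma sum_prod_mul_sum_sq {α : Type*} [Fintype α] {q Y : α → ℝ} (hq : ∑ b, q b = 1)
    (hY : ∑ b, q b * Y b = 0) (n : ℕ) :
    ∑ x : Fin n → α, (∏ j, q (x j)) * (∑ j, Y (x j)) ^ 2 = n * ∑ b, q b * Y b ^ 2 := by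
  induction n with
  | zero => simp
  | succ n ih =>
    rw [← (Fin.consEquiv fun _ => α).sum_comp, Fintype.sum_prod_type]
    simp only [Fin.consEquiv_apply, Fin.prod_univ_succ, Fin.sum_univ_succ, Fin.cons_zero,
      Fin.cons_succ]
    have hexpand : ∀ b (y : Fin n → α), q b * (∏ j, q (y j)) * (Y b + ∑ j, Y (y j)) ^ 2 =
        q b * Y b ^ 2 * ∏ j, q (y j) + 2 * (q b * Y b) * ((∏ j, q (y j)) * ∑ j, Y (y j)) +
          q b * ((∏ j, q (y j)) * (∑ j, Y (y j)) ^ 2) := fun b y => by ring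
    simp only [hexpand, sum_add_distrib, ← mul_sum, ← sum_mul,
      sum_prod_eq_one hq, ih, hY, hq]
    push_cast
    ring

section WeakLaw

variable {α : Type*} [Fintype α] [DecidableEq α] {q : α → ℝ}

lemma sum_prod_mul_wordType_sub_sq_le (hq : q ∈ stdSimplex ℝ α) (a : α) {n : ℕ} (hn : n ≠ 0) :
    ∑ x : Fin n → α, (∏ j, q (x j)) * (wordType x a - q a) ^ 2 ≤ 1 / n := by
  set Y : α → ℝ := fun b => (if b = a then 1 else 0) - q a
  have hY : ∑ b, q b * Y b = 0 := by
    simp [Y, mul_sub, sum_sub_distrib, ← sum_mul, hq.2]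
  have hY2 : ∑ b, q b * Y b ^ 2 ≤ 1 := by
    have hqa : q a ≤ 1 := hq.2 ▸ single_le_sum (fun b _ => hq.1 b) (mem_univ a)
    have hYsq : ∀ b, Y b ^ 2 ≤ 1 := fun b => by
      have := hq.1 a
      by_cases hb : b = a <;> simp only [Y, hb, if_true, if_false] <;> nlinarith
    calc ∑ b, q b * Y b ^ 2 ≤ ∑ b, q b :=
          sum_le_sum fun b _ => mul_le_of_le_one_right (hq.1 b) (hYsq b)
      _ = 1 := hq.2
  have hdev : ∀ x : Fin n → α, wordType x a - q a = (∑ j, Y (x j)) / n := by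
    intro x
    rw [sum_comp_eq_mul_sum_wordType, mul_div_cancel_left₀ _ (Nat.cast_ne_zero.2 hn)]
    simp [Y, mul_sub, sum_sub_distrib, ← sum_mul,
      (wordType_mem_stdSimplex hn x).2]
  have hnpos : (0 : ℝ) < n := Nat.cast_pos.2 (Nat.pos_of_ne_zero hn)
  calc ∑ x : Fin n → α, (∏ j, q (x j)) * (wordType x a - q a) ^ 2
      = (∑ x : Fin n → α, (∏ j, q (x j)) * (∑ j, Y (x j)) ^ 2) / n ^ 2 := by
        rw [sum_div]
        exact sum_congr rfl fun x _ => by rw [hdev]; ring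
    _ ≤ 1 / n := by
        rw [sum_prod_mul_sum_sq hq.2 hY, div_le_div_iff₀ (by positivity) hnpos]
        nlinarith

lemma one_sub_div_le_sum_prod_dist_wordType_le (hq : q ∈ stdSimplex ℝ α) {δ : ℝ} (hδ : 0 < δ)
    {n : ℕ} (hn : n ≠ 0) :
    1 - Fintype.card α / (n * δ ^ 2) ≤
      ∑ x : Fin n → α with dist (wordType x) q ≤ δ, ∏ j, q (x j) := by
  set w : (Fin n → α) → ℝ := fun x => ∏ j, q (x j)
  have hw : ∀ x, 0 ≤ w x := fun x => prod_nonneg fun j _ => hq.1 _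
  have hbad : ∑ x with ¬dist (wordType x) q ≤ δ, w x ≤ Fintype.card α / (n * δ ^ 2) :=
    calc ∑ x with ¬dist (wordType x) q ≤ δ, w x
        ≤ ∑ x with ¬dist (wordType x) q ≤ δ, w x * ∑ a, (wordType x a - q a) ^ 2 / δ ^ 2 := by
          refine sum_le_sum fun x hx => ?_
          have hfar : δ < dist (wordType x) q := not_le.1 (mem_filter.1 hx).2
          have : δ ^ 2 ≤ ∑ a, (wordType x a - q a) ^ 2 :=
            (pow_le_pow_left₀ hδ.le hfar.le 2).trans (dist_sq_le_sum_sq _ _)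
          rw [← sum_div, ← mul_div_assoc, le_div_iff₀ (by positivity)]
          exact mul_le_mul_of_nonneg_left this (hw x)
      _ ≤ ∑ x, w x * ∑ a, (wordType x a - q a) ^ 2 / δ ^ 2 :=
          sum_le_sum_of_subset_of_nonneg (filter_subset _ _) fun x _ _ =>
            mul_nonneg (hw x) (sum_nonneg fun _ _ => by positivity)
      _ = ∑ a, (∑ x, w x * (wordType x a - q a) ^ 2) / δ ^ 2 := by
          simp_rw [mul_sum, sum_div, mul_div_assoc]
          exact sum_comm
      _ ≤ ∑ _a : α, 1 / n / δ ^ 2 := by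
          gcongr with a
          exact sum_prod_mul_wordType_sub_sq_le hq a hn
      _ = Fintype.card α / (n * δ ^ 2) := by
          rw [sum_const, card_univ, nsmul_eq_mul]
          field_simp
  have htotal := sum_filter_add_sum_filter_not univ (fun x => dist (wordType x) q ≤ δ) w
  rw [sum_prod_eq_one hq.2] at htotal
  linarith

end WeakLaw

section LowerBound

variable {M : ℕ} {Q q : Fin M → ℝ} {S : Set (Fin M → ℝ)}

lemma one_sub_div_mul_exp_le_typeProb (hQ : ∀ a, 0 < Q a) (hq : q ∈ stdSimplex ℝ (Fin M))
    (hqpos : ∀ a, 0 < q a) {δ c : ℝ} (hδ : 0 < δ)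
    (hball : ∀ t ∈ stdSimplex ℝ (Fin M), dist t q ≤ δ →
      t ∈ S ∧ ∑ a, t a * log (q a / Q a) ≤ c) {n : ℕ} (hn : n ≠ 0) :
    (1 - M / (n * δ ^ 2)) * exp (-(n * c)) ≤ typeProb Q S n := by
  have hgood : ∀ x : Fin n → Fin M, dist (wordType x) q ≤ δ →
      wordType x ∈ S ∧ exp (-(n * c)) * ∏ j, q (x j) ≤ ∏ j, Q (x j) := by
    intro x hx
    obtain ⟨hS, hc⟩ := hball _ (wordType_mem_stdSimplex hn x) hx
    refine ⟨hS, ?_⟩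
    rw [prod_comp_eq_exp_mul_prod x (fun j => hQ _) (fun j => hqpos _), sum_mul_log_div_comm]
    refine mul_le_mul_of_nonneg_right (exp_le_exp.2 ?_) (prod_nonneg fun j _ => hq.1 _)
    nlinarith [(Nat.cast_nonneg n : (0 : ℝ) ≤ n)]
  calc (1 - M / (n * δ ^ 2)) * exp (-(n * c))
      ≤ (∑ x : Fin n → Fin M with dist (wordType x) q ≤ δ, ∏ j, q (x j)) * exp (-(n * c)) := by
        gcongr
        simpa using one_sub_div_le_sum_prod_dist_wordType_le hq hδ hn
    _ = ∑ x : Fin n → Fin M with dist (wordType x) q ≤ δ, exp (-(n * c)) * ∏ j, q (x j) := by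
        rw [sum_mul]
        simp_rw [mul_comm]
    _ ≤ ∑ x : Fin n → Fin M with dist (wordType x) q ≤ δ, ∏ j, Q (x j) :=
        sum_le_sum fun x hx => (hgood x (mem_filter.1 hx).2).2
    _ ≤ typeProb Q S n := by
        unfold typeProb
        refine sum_le_sum_of_subset_of_nonneg (fun x hx => ?_) fun x _ _ =>
          prod_nonneg fun j _ => (hQ _).le
        simp only [mem_filter, mem_univ, true_and] at hx ⊢
        exact (hgood x hx).1

lemma eventually_exp_le_two_mul_typeProb (hQ : ∀ a, 0 < Q a) (hq : q ∈ stdSimplex ℝ (Fin M))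
    (hqpos : ∀ a, 0 < q a) (hS : S ∈ 𝓝[stdSimplex ℝ (Fin M)] q) {c : ℝ} (hc : klDiv q Q < c) :
    ∀ᶠ n : ℕ in atTop, exp (-(n * c)) ≤ 2 * typeProb Q S n := by
  -- at `t = q` the left-hand side is `klDiv q Q`
  have hnear : ∀ᶠ t in 𝓝 q, ∑ a, t a * log (q a / Q a) < c :=
    (continuous_finsetSum _ fun a _ => (continuous_apply a).mul continuous_const).continuousAt
      |>.eventually (gt_mem_nhds hc)
  obtain ⟨δ, hδ, hball⟩ :=
    Metric.mem_nhdsWithin_iff.1 (Filter.inter_mem hS (mem_nhdsWithin_of_mem_nhds hnear))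
  have hsmall : ∀ᶠ n : ℕ in atTop, M / (δ / 2) ^ 2 / n ≤ 1 / 2 :=
    (tendsto_const_div_atTop_nhds_zero_nat _).eventually (ge_mem_nhds (by norm_num))
  filter_upwards [hsmall, eventually_ne_atTop 0] with n hsmall hn
  have hlow := one_sub_div_mul_exp_le_typeProb hQ hq hqpos (half_pos hδ) (c := c)
    (fun t ht htq => (hball ⟨Metric.mem_ball.2 (htq.trans_lt (half_lt_self hδ)), ht⟩).imp_right
      le_of_lt) hn
  rw [mul_comm (n : ℝ), ← div_div] at hlow
  nlinarith [exp_pos (-(n * c))]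

end LowerBound

lemma tendsto_log_add_one_div_natCast :
    Tendsto (fun n : ℕ => log (n + 1) / n) atTop (𝓝 0) := by
  have h := (tendsto_pow_log_div_mul_add_atTop 1 (-1) 1 one_ne_zero).comp
    (tendsto_atTop_add_const_right _ 1 tendsto_natCast_atTop_atTop)
  refine h.congr fun n => ?_
  simp

lemma neg_sub_log_two_div_le_inv_mul_log {s c : ℝ} {n : ℕ} (hn : n ≠ 0)
    (hs : exp (-(n * c)) ≤ 2 * s) : -c - log 2 / n ≤ 1 / n * log s := by
  have hs0 : 0 < s := by linarith [exp_pos (-(n * c))]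
  have h := log_le_log (exp_pos _) hs
  rw [log_exp, log_mul two_ne_zero hs0.ne'] at h
  have hn0 : (n : ℝ) ≠ 0 := Nat.cast_ne_zero.2 hn
  calc -c - log 2 / n = 1 / n * (-(n * c) - log 2) := by field_simp
    _ ≤ 1 / n * log s := by gcongr; linarith

lemma inv_mul_log_le {s D : ℝ} {n M : ℕ} (hn : n ≠ 0) (hs : 0 < s)
    (hle : s ≤ (n + 1) ^ M * exp (-(n * D))) : 1 / n * log s ≤ M * (log (n + 1) / n) - D := by
  have h := log_le_log hs hle
  rw [log_mul (by positivity) (exp_pos _).ne', log_pow, log_exp] at h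
  have hn0 : (n : ℝ) ≠ 0 := Nat.cast_ne_zero.2 hn
  calc 1 / n * log s ≤ 1 / n * (M * log (n + 1) + -(n * D)) := by gcongr
    _ = M * (log (n + 1) / n) - D := by field_simp; ring

theorem tendsto_inv_mul_log_typeProb {M : ℕ} {Q : Fin M → ℝ} (hQ : Q ∈ stdSimplex ℝ (Fin M))
    (hQpos : ∀ a, 0 < Q a) {S : Set (Fin M → ℝ)} (hS : S ⊆ stdSimplex ℝ (Fin M))
    (hinner : ∀ ε > 0, ∃ q ∈ stdSimplex ℝ (Fin M), (∀ a, 0 < q a) ∧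
      S ∈ 𝓝[stdSimplex ℝ (Fin M)] q ∧ klDiv q Q < sInf ((klDiv · Q) '' S) + ε) :
    Tendsto (fun n : ℕ => 1 / (n : ℝ) * log (typeProb Q S n)) atTop
      (𝓝 (-sInf ((klDiv · Q) '' S))) := by
  set D := sInf ((klDiv · Q) '' S)
  have hD : ∀ p ∈ S, D ≤ klDiv p Q := fun p hp =>
    csInf_le ⟨0, Set.forall_mem_image.2 fun p hp => klDiv_nonneg (hS hp) hQ hQpos⟩
      (Set.mem_image_of_mem _ hp)
  have hlower : ∀ ε > 0, ∀ᶠ n : ℕ in atTop, exp (-(n * (D + ε))) ≤ 2 * typeProb Q S n := by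
    intro ε hε
    obtain ⟨q, hq, hqpos, hSq, hqD⟩ := hinner ε hε
    exact eventually_exp_le_two_mul_typeProb hQpos hq hqpos hSq hqD
  refine tendsto_order.2 ⟨fun a ha => ?_, fun a ha => ?_⟩
  · obtain ⟨ε, hε, haε⟩ : ∃ ε > 0, a < -(D + ε) := ⟨(-D - a) / 2, by linarith, by linarith⟩
    have hlim : Tendsto (fun n : ℕ => -(D + ε) - log 2 / n) atTop (𝓝 (-(D + ε))) := by
      simpa using tendsto_const_nhds.sub (tendsto_const_div_atTop_nhds_zero_nat (log 2))
    filter_upwards [hlim.eventually (lt_mem_nhds haε), hlower ε hε,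
      eventually_ne_atTop 0] with n hlt hexp hn
    exact hlt.trans_le (neg_sub_log_two_div_le_inv_mul_log hn hexp)
  · have hlim : Tendsto (fun n : ℕ => M * (log (n + 1) / n) - D) atTop (𝓝 (-D)) := by
      simpa using (tendsto_log_add_one_div_natCast.const_mul (M : ℝ)).sub_const D
    filter_upwards [hlim.eventually (gt_mem_nhds ha), hlower 1 one_pos,
      eventually_ne_atTop 0] with n hlt hexp hn
    have hpos : 0 < typeProb Q S n := by linarith [exp_pos (-(n * (D + 1)))]
    exact (inv_mul_log_le hn hpos (typeProb_le hQpos hD hn)).trans_lt hlt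

lemma exists_pos_mem_stdSimplex_of_isOpen {ι : Type*} [Fintype ι] {U : Set (ι → ℝ)}
    (hU : IsOpen U) {p r : ι → ℝ} (hp : p ∈ stdSimplex ℝ ι) (hpU : p ∈ U)
    (hr : r ∈ stdSimplex ℝ ι) (hrpos : ∀ i, 0 < r i) :
    ∃ q ∈ stdSimplex ℝ ι, q ∈ U ∧ ∀ i, 0 < q i := by
  have hpath : Tendsto (fun s : ℝ => (1 - s) • p + s • r) (𝓝 0) (𝓝 p) := by
    have hcont : Continuous fun s : ℝ => (1 - s) • p + s • r := by fun_prop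
    simpa using hcont.tendsto 0
  have hnear : ∀ᶠ s in 𝓝[>] (0 : ℝ), (1 - s) • p + s • r ∈ U :=
    nhdsWithin_le_nhds (hpath.eventually (hU.mem_nhds hpU))
  obtain ⟨s, hsU, hs0, hs1⟩ := (hnear.and (Ioc_mem_nhdsGT one_pos)).exists
  refine ⟨_, convex_stdSimplex ℝ ι hp hr (by linarith) hs0.le (by ring), hsU, fun i => ?_⟩
  have := hp.1 i
  have := hrpos i
  simp only [Pi.add_apply, Pi.smul_apply, smul_eq_mul]
  nlinarith

lemma isOpen_setOf_exists_pos {K m : ℕ} (A : Matrix (Fin K) (Fin m) ℝ) :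
    IsOpen {t : Fin (m + 1) → ℝ | ∃ i, 0 < ∑ j, A i j * t j.castSucc} := by
  simp only [Set.ofPred_exists]
  exact isOpen_iUnion fun i => isOpen_lt continuous_const (by fun_prop)

lemma exists_pos_piSet_mem_nhdsWithin_klDiv_lt {K m : ℕ} {A : Matrix (Fin K) (Fin m) ℝ}
    {Q : Fin (m + 1) → ℝ}
    (hQ : Q ∈ stdSimplex ℝ (Fin (m + 1))) (hQpos : ∀ a, 0 < Q a) (hne : (PiSet A).Nonempty)
    (hreg : RegularPi A) {ε : ℝ} (hε : 0 < ε) :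
    ∃ q ∈ stdSimplex ℝ (Fin (m + 1)), (∀ a, 0 < q a) ∧
      PiSet A ∈ 𝓝[stdSimplex ℝ (Fin (m + 1))] q ∧
      klDiv q Q < sInf ((klDiv · Q) '' PiSet A) + ε := by
  set D := sInf ((klDiv · Q) '' PiSet A)
  have hlt : IsOpen {t | klDiv t Q < D + ε} :=
    isOpen_lt (continuous_klDiv hQpos) continuous_const
  obtain ⟨_, ⟨p, hp, rfl⟩, hpD⟩ := Real.lt_sInf_add_pos (hne.image _) hε
  obtain ⟨q₀, hq₀D, hq₀, hq₀A⟩ := mem_closure_iff.1 (hreg p hp) _ hlt hpD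
  obtain ⟨q, hq, ⟨hqD, hqA⟩, hqpos⟩ := exists_pos_mem_stdSimplex_of_isOpen
    (hlt.inter (isOpen_setOf_exists_pos A)) hq₀ ⟨hq₀D, hq₀A⟩ hQ hQpos
  exact ⟨q, hq, hqpos, mem_nhdsWithin.2 ⟨_, isOpen_setOf_exists_pos A, hqA,
    fun t ⟨htA, ht⟩ => ⟨ht, htA.imp fun i => le_of_lt⟩⟩, hqD⟩

open MeasureTheory in
lemma measureReal_empiricalType_mem {M : ℕ} {Ω : Type*} [MeasurableSpace Ω] {P : Measure Ω}
    [IsFiniteMeasure P] {Z : ℕ → Ω → Fin M} (hmeas : ∀ i, Measurable (Z i))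
    (hindep : iIndepFun Z P) {Q : Fin M → ℝ} (hQ : ∀ a, 0 ≤ Q a)
    (hdist : ∀ i a, P {ω | Z i ω = a} = ENNReal.ofReal (Q a)) (S : Set (Fin M → ℝ)) (n : ℕ) :
    P.real {ω | empiricalType Z n ω ∈ S} = typeProb Q S n := by
  classical
  set X : Ω → Fin n → Fin M := fun ω j => Z j ω
  change P.real {ω | wordType (X ω) ∈ S} = _
  have hX : Measurable X := measurable_pi_lambda X fun j => hmeas j
  have hword : ∀ x, P.real (X ⁻¹' {x}) = ∏ j, Q (x j) := by
    intro x
    have hfiber : X ⁻¹' {x} = ⋂ j ∈ (univ : Finset (Fin n)), Z j ⁻¹' {x j} := by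
      ext ω; simp [X, funext_iff]
    rw [measureReal_def, hfiber, (hindep.precomp (g := (Fin.val : Fin n → ℕ))
      Fin.val_injective).measure_inter_preimage_eq_mul _ fun j _ => measurableSet_singleton _,
      ENNReal.toReal_prod]
    refine prod_congr rfl fun j _ => ?_
    change (P {ω | Z j ω = x j}).toReal = Q (x j)
    rw [hdist, ENNReal.toReal_ofReal (hQ _)]
  have hevent : {ω | wordType (X ω) ∈ S} =
      X ⁻¹' ((univ.filter fun x : Fin n → Fin M => wordType x ∈ S : Finset _) : Set _) := by
    ext; simp
  rw [hevent, ← sum_measureReal_preimage_singleton _ fun x _ => hX (measurableSet_singleton x)]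
  exact sum_congr rfl fun x _ => hword x

theorem sanov_error_exponent_general
    {K m : ℕ} (A : Matrix (Fin K) (Fin m) ℝ)
    (Q : Fin (m + 1) → ℝ) (hQ : Q ∈ stdSimplex ℝ (Fin (m + 1)))
    (hQpos : ∀ i, 0 < Q i)
    (hne : (PiSet A).Nonempty)
    (hreg : RegularPi A)
    {Ω : Type*} [MeasurableSpace Ω] (P : MeasureTheory.Measure Ω)
    [MeasureTheory.IsProbabilityMeasure P]
    (Z : ℕ → Ω → Fin (m + 1))
    (hmeas : ∀ i, Measurable (Z i))
    (hindep : iIndepFun Z P)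
    (hdist : ∀ (i : ℕ) (a : Fin (m + 1)), P {ω | Z i ω = a} = ENNReal.ofReal (Q a)) :
    Tendsto
      (fun n : ℕ => (1 / (n : ℝ)) *
        Real.log ((P {ω | empiricalType Z n ω ∈ PiSet A}).toReal))
      atTop
      (nhds (-(sInf ((fun p => klDiv p Q) '' PiSet A)))) := by
  have hevent : ∀ n : ℕ,
      (P {ω | empiricalType Z n ω ∈ PiSet A}).toReal = typeProb Q (PiSet A) n :=
    measureReal_empiricalType_mem hmeas hindep (fun a => (hQpos a).le) hdist (PiSet A)
  simp only [hevent]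
  exact tendsto_inv_mul_log_typeProb hQ hQpos (fun p hp => hp.1) fun ε hε =>
    exists_pos_piSet_mem_nhdsWithin_klDiv_lt hQ hQpos hne hreg hε

/-- Sanov-type result: for i.i.d. samples with full-support
distribution `Q ∉ Π`, `Π` nonempty and regular,
`lim_{n→∞} (1/n) ln P(T_n ∈ Π) = −D_KL(Π‖Q)`. -/
theorem sanov_error_exponent
    {K m : ℕ} (A : Matrix (Fin K) (Fin m) ℝ)
    (Q : Fin (m + 1) → ℝ) (hQ : Q ∈ stdSimplex ℝ (Fin (m + 1)))
    (hQpos : ∀ i, 0 < Q i)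
    (hne : (PiSet A).Nonempty) (hQnot : Q ∉ PiSet A)
    (hreg : RegularPi A)
    {Ω : Type*} [MeasurableSpace Ω] (P : MeasureTheory.Measure Ω)
    [MeasureTheory.IsProbabilityMeasure P]
    (Z : ℕ → Ω → Fin (m + 1))
    (hmeas : ∀ i, Measurable (Z i))
    (hindep : iIndepFun Z P)
    (hdist : ∀ (i : ℕ) (a : Fin (m + 1)), P {ω | Z i ω = a} = ENNReal.ofReal (Q a)) :
    Tendsto
      (fun n : ℕ => (1 / (n : ℝ)) *
        Real.log ((P {ω | empiricalType Z n ω ∈ PiSet A}).toReal))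
      atTop
      (nhds (-(sInf ((fun p => klDiv p Q) '' PiSet A)))) :=
  sanov_error_exponent_general A Q hQ hQpos hne hreg P Z hmeas hindep hdist

end
end
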